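/- arXiv:math/0409043 — 4 statements merged into one kernel-verified Lean document; each statement's English description precedes it below -/
import Mathlib

section
/- Let G be a totally disconnected, locally compact Hausdorff topological group and α a bicontinuous automorphism of G. For every compact open subgroup W of the topological group M_α that is tidy for α|_{M_α}, one has K ⊆ W_{--}, where W_{--} = ⋃_{n≥0} α^{-n}(W_-) is computed inside M_α. Consequently K is contained in the intersection of W_{--} over all subgroups W of M_α tidy for α|_{M_α}. -/
open Filter Topology Set Pointwise MeasureTheory
open scoped ENNReal

variable {G : Type*} [Group G] [TopologicalSpace G] [IsTopologicalGroup G]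

/-- `V₊ = ⋂ n ≥ 0, α^n(V)`. -/
def posPart (α : MulAut G) (V : Set G) : Set G := ⋂ n : ℕ, ⇑(α ^ n) '' V

/-- `V₋ = ⋂ n ≥ 0, α^{-n}(V)`. -/
def negPart (α : MulAut G) (V : Set G) : Set G := ⋂ n : ℕ, ⇑(α⁻¹ ^ n) '' V

/-- `V₊₊ = ⋃ n ≥ 0, α^n(V₊)`. -/
def ppPart (α : MulAut G) (V : Set G) : Set G := ⋃ n : ℕ, ⇑(α ^ n) '' posPart α V

/-- `V₋₋ = ⋃ n ≥ 0, α^{-n}(V₋)`. -/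
def mmPart (α : MulAut G) (V : Set G) : Set G := ⋃ n : ℕ, ⇑(α⁻¹ ^ n) '' negPart α V

/-- A compact open subgroup `V ⊆ G` is tidy for `α` if (T1) `V = V₊V₋` and
(T2) `V₊₊` and `V₋₋` are closed in `G`. -/
def IsTidyFor (α : MulAut G) (V : Subgroup G) : Prop :=
  IsCompact (V : Set G) ∧ IsOpen (V : Set G) ∧
  (V : Set G) = posPart α (V : Set G) * negPart α (V : Set G) ∧
  IsClosed (ppPart α (V : Set G)) ∧ IsClosed (mmPart α (V : Set G))

/-- `α` is tidy if every identity neighbourhood of `G` contains a compact open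
subgroup of `G` tidy for `α`. -/
def IsTidy (α : MulAut G) : Prop :=
  ∀ U ∈ 𝓝 (1 : G), ∃ V : Subgroup G, IsTidyFor α V ∧ (V : Set G) ⊆ U

/-- The contraction group `U_α = {x : α^n(x) → 1}`. -/
def contractionGroup (α : MulAut G) : Set G :=
  {x : G | Tendsto (fun n : ℕ => (α ^ n) x) atTop (𝓝 1)}

/-- `P_α = {x : {α^n(x), n ∈ ℕ} relatively compact}`. -/
def parSet (α : MulAut G) : Set G :=
  {x : G | IsCompact (closure (Set.range fun n : ℕ => (α ^ n) x))}

/-- `M_α = {x : {α^n(x), n ∈ ℤ} relatively compact}`. -/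
def levSet (α : MulAut G) : Set G :=
  {x : G | IsCompact (closure (Set.range fun n : ℤ => (α ^ n) x))}

/-- A subgroup `V` of `G` contained in an `α`-stable subset `M ⊆ G` is a compact
open subgroup of the topological group `M` tidy for the restriction `α|_M`
(openness and closedness of `V`, `V₊₊`, `V₋₋` being relative to `M`). -/
def IsTidyForIn (α : MulAut G) (M : Set G) (V : Subgroup G) : Prop :=
  (V : Set G) ⊆ M ∧ IsCompact (V : Set G) ∧
  IsOpen ((Subtype.val ⁻¹' (V : Set G)) : Set M) ∧
  (V : Set G) = posPart α (V : Set G) * negPart α (V : Set G) ∧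
  IsClosed ((Subtype.val ⁻¹' ppPart α (V : Set G)) : Set M) ∧
  IsClosed ((Subtype.val ⁻¹' mmPart α (V : Set G)) : Set M)

/-- The restriction `α|_M` is tidy: every identity neighbourhood of the topological
group `M` contains a compact open subgroup of `M` tidy for `α|_M`. -/
def IsTidyOn (α : MulAut G) (M : Set G) : Prop :=
  ∀ U ∈ 𝓝 (1 : G), ∃ V : Subgroup G, IsTidyForIn α M V ∧ (V : Set G) ⊆ U

/-- `U_{α/H}`: the set of `x ∈ G` with `α^n(x) → 1` modulo `H`. -/
def relContraction (α : MulAut G) (H : Set G) : Set G :=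
  {x : G | ∀ V ∈ 𝓝 (1 : G), ∃ N : ℕ, ∀ n ≥ N, (α ^ n) x ∈ V * H}

/-- The set `K`: the intersection, over all compact open subgroups `O` of `G`, of the
closures of `{x ∈ M_α : α^n(x) ∈ O for all sufficiently large n}`. -/
def KSet (α : MulAut G) : Set G :=
  ⋂ O ∈ {O : Subgroup G | IsCompact (O : Set G) ∧ IsOpen (O : Set G)},
    closure {x ∈ levSet α | ∃ N : ℕ, ∀ n ≥ N, (α ^ n) x ∈ O}

/-- `V₋ = ⋂ n ≥ 0, α^{-n}(V)` as a subgroup. -/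
def negSubgroup (α : MulAut G) (V : Subgroup G) : Subgroup G :=
  ⨅ n : ℕ, V.map ((α⁻¹ ^ n : MulAut G) : G →* G)

/-- The index `[α^{-1}(H) : H]` of a subgroup `H` in `α^{-1}(H)` (equal to `0` if
this index is infinite). -/
noncomputable def idx (α : MulAut G) (H : Subgroup G) : ℕ :=
  H.relIndex (H.map ((α⁻¹ : MulAut G) : G →* G))

section AuxVD

variable {G : Type*} [Group G] [TopologicalSpace G] [IsTopologicalGroup G]

theorem aux_exist_mul_closure_nhd {W : Set G} (Wcomp : IsCompact W) (Wopen : IsOpen W) :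
    ∃ T ∈ 𝓝 (1 : G), W * T ⊆ W := by
  apply Wcomp.induction_on (p := fun S ↦ ∃ T ∈ 𝓝 (1 : G), S * T ⊆ W)
    ⟨Set.univ, by simp only [univ_mem, Set.empty_mul, Set.empty_subset, and_self]⟩
    (fun _ _ huv ⟨T, hT, mem⟩ ↦ ⟨T, hT, (Set.mul_subset_mul_right huv).trans mem⟩)
    (fun U V ⟨T₁, hT₁, mem1⟩ ⟨T₂, hT₂, mem2⟩ ↦ ⟨T₁ ∩ T₂, inter_mem hT₁ hT₂, by
      rw [Set.union_mul]
      exact Set.union_subset ((Set.mul_subset_mul_left Set.inter_subset_left).trans mem1)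
        ((Set.mul_subset_mul_left Set.inter_subset_right).trans mem2)⟩)
  intro x memW
  have : (x, (1 : G)) ∈ (fun p : G × G ↦ p.1 * p.2) ⁻¹' W := by simp [memW]
  rcases isOpen_prod_iff.mp (continuous_mul.isOpen_preimage W Wopen) x 1 this with
    ⟨U, V, Uopen, Vopen, xmemU, onememV, prodsub⟩
  have h6 : U * V ⊆ W := Set.mul_subset_iff.mpr fun _ hx _ hy ↦ prodsub (Set.mk_mem_prod hx hy)
  exact ⟨U ∩ W, ⟨U, Uopen.mem_nhds xmemU, W, fun _ a ↦ a, rfl⟩,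
    V, Vopen.mem_nhds onememV, fun _ a ↦ h6 ((Set.mul_subset_mul_right Set.inter_subset_left) a)⟩

theorem aux_exist_subgroup {W : Set G} (Wcomp : IsCompact W) (Wopen : IsOpen W)
    (einW : (1 : G) ∈ W) [T2Space G] :
    ∃ H : Subgroup G, IsCompact (H : Set G) ∧ IsOpen (H : Set G) ∧ (H : Set G) ⊆ W := by
  obtain ⟨S, Smemnhds, mulclose⟩ := aux_exist_mul_closure_nhd Wcomp Wopen
  rcases mem_nhds_iff.mp Smemnhds with ⟨U, UsubS, Uopen, onememU⟩
  set V := U ∩ U⁻¹ with hVdef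
  have Vnhd : (1 : G) ∈ V := ⟨onememU, by simpa using onememU⟩
  have Vinv : V⁻¹ = V := by simp [hVdef, Set.inter_inv, Set.inter_comm]
  have Vopen : IsOpen V := Uopen.inter Uopen.inv
  have VsubS : V ⊆ S := fun x hx => UsubS hx.1
  let H : Subgroup G :=
    { carrier := ⋃ n, V ^ (n + 1)
      mul_mem' := fun ha hb ↦ by
        rcases Set.mem_iUnion.mp ha with ⟨k, hk⟩
        rcases Set.mem_iUnion.mp hb with ⟨l, hl⟩
        apply Set.mem_iUnion.mpr
        use k + 1 + l
        rw [add_assoc, pow_add]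
        exact Set.mul_mem_mul hk hl
      one_mem' := Set.mem_iUnion.mpr ⟨0, by simpa using Vnhd⟩
      inv_mem' := fun ha ↦ by
        rcases Set.mem_iUnion.mp ha with ⟨k, hk⟩
        apply Set.mem_iUnion.mpr
        use k
        rw [← Vinv]
        simpa only [inv_pow, Set.mem_inv, inv_inv] using hk }
  have Hopen : IsOpen (H : Set G) := by
    refine isOpen_iUnion fun n ↦ ?_
    rw [pow_succ]
    exact Vopen.mul_left
  have mulVpow : ∀ n : ℕ, W * V ^ (n + 1) ⊆ W := by
    intro n
    induction n with
    | zero => simpa only [zero_add, pow_one] using (Set.mul_subset_mul_left VsubS).trans mulclose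
    | succ n ih =>
        rw [pow_succ, ← mul_assoc]
        exact ((Set.mul_subset_mul_right ih).trans
          ((Set.mul_subset_mul_left VsubS).trans mulclose))
  have HsubW : (H : Set G) ⊆ W := by
    intro x hx
    rcases Set.mem_iUnion.mp hx with ⟨n, hn⟩
    have : (1 : G) * x ∈ W * V ^ (n + 1) := Set.mul_mem_mul einW hn
    rw [one_mul] at this
    exact mulVpow n this
  have Hclosed : IsClosed (H : Set G) := H.isClosed_of_isOpen Hopen
  exact ⟨H, Wcomp.of_isClosed_subset Hclosed HsubW, Hopen, HsubW⟩

theorem aux_vanDantzig [T2Space G] [LocallyCompactSpace G] [TotallyDisconnectedSpace G]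
    {U : Set G} (hU : IsOpen U) (h1 : (1 : G) ∈ U) :
    ∃ O : Subgroup G, IsCompact (O : Set G) ∧ IsOpen (O : Set G) ∧ (O : Set G) ⊆ U := by
  obtain ⟨s, scomp, h1s, hsU⟩ := exists_compact_subset hU h1
  obtain ⟨C, hC, h1C, hCsub⟩ :=
    (loc_compact_Haus_tot_disc_of_zero_dim).mem_nhds_iff.mp (isOpen_interior.mem_nhds h1s)
  have hCclopen : IsClopen C := hC
  have hCsubs : C ⊆ s := hCsub.trans interior_subset
  have hCcomp : IsCompact C := scomp.of_isClosed_subset hCclopen.isClosed hCsubs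
  obtain ⟨H, hHc, hHo, hHsub⟩ := aux_exist_subgroup hCcomp hCclopen.isOpen h1C
  exact ⟨H, hHc, hHo, hHsub.trans (hCsubs.trans hsU)⟩

end AuxVD

section AuxMM

variable {G : Type*} [Group G] [TopologicalSpace G] [IsTopologicalGroup G]

theorem aux_pow_inv_apply (α : MulAut G) (m : ℕ) (w : G) : (α ^ m) ((α⁻¹ ^ m) w) = w := by
  rw [← MulAut.mul_apply, inv_pow, mul_inv_cancel, MulAut.one_apply]

theorem aux_inv_pow_apply (α : MulAut G) (m : ℕ) (w : G) : (α⁻¹ ^ m) ((α ^ m) w) = w := by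
  rw [← MulAut.mul_apply, inv_pow, inv_mul_cancel, MulAut.one_apply]

theorem aux_mem_image_inv_pow {α : MulAut G} {m : ℕ} {S : Set G} {z : G} :
    z ∈ ⇑(α⁻¹ ^ m) '' S ↔ (α ^ m) z ∈ S := by
  constructor
  · rintro ⟨w, hw, rfl⟩
    rwa [aux_pow_inv_apply]
  · intro h
    exact ⟨(α ^ m) z, h, aux_inv_pow_apply α m z⟩

theorem aux_mem_negPart {α : MulAut G} {S : Set G} {z : G} :
    z ∈ _root_.negPart α S ↔ ∀ n : ℕ, (α ^ n) z ∈ S := by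
  simp only [_root_.negPart, Set.mem_iInter, aux_mem_image_inv_pow]

theorem aux_mem_mmPart {α : MulAut G} {S : Set G} {x : G} :
    x ∈ mmPart α S ↔ ∃ m : ℕ, ∀ n ≥ m, (α ^ n) x ∈ S := by
  simp only [mmPart, Set.mem_iUnion, aux_mem_image_inv_pow, aux_mem_negPart]
  constructor
  · rintro ⟨m, h⟩
    refine ⟨m, fun n hn => ?_⟩
    have := h (n - m)
    rwa [← MulAut.mul_apply, ← pow_add, Nat.sub_add_cancel hn] at this
  · rintro ⟨m, h⟩
    refine ⟨m, fun n => ?_⟩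
    rw [← MulAut.mul_apply, ← pow_add]
    exact h (n + m) (Nat.le_add_left m n)

theorem aux_levSet_zpow (α : MulAut G) (k : ℤ) {y : G} (hy : y ∈ levSet α) :
    (α ^ k) y ∈ levSet α := by
  have hrange : (Set.range fun n : ℤ => (α ^ n) ((α ^ k) y))
      = Set.range fun n : ℤ => (α ^ n) y := by
    ext z
    simp only [Set.mem_range]
    constructor
    · rintro ⟨n, rfl⟩
      exact ⟨n + k, by rw [zpow_add, MulAut.mul_apply]⟩
    · rintro ⟨n, rfl⟩
      refine ⟨n - k, ?_⟩
      rw [← MulAut.mul_apply, ← zpow_add]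
      simp
  simpa only [levSet, Set.mem_setOf_eq, hrange] using hy

theorem aux_levSet_pow (α : MulAut G) (n : ℕ) {y : G} (hy : y ∈ levSet α) :
    (α ^ n) y ∈ levSet α := by
  have := aux_levSet_zpow α (n : ℤ) hy
  rwa [zpow_natCast] at this

theorem aux_levSet_of_pow (α : MulAut G) (n : ℕ) {x : G} (h : (α ^ n) x ∈ levSet α) :
    x ∈ levSet α := by
  have h2 := aux_levSet_zpow α (-(n : ℤ)) h
  have hx : (α ^ (-(n : ℤ))) ((α ^ n) x) = x := by
    rw [← zpow_natCast α n, ← MulAut.mul_apply, ← zpow_add]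
    simp
  rwa [hx] at h2

theorem aux_mmPart_subset_levSet {α : MulAut G} {W : Subgroup G}
    (hWM : (W : Set G) ⊆ levSet α) : mmPart α (W : Set G) ⊆ levSet α := by
  intro x hx
  obtain ⟨m, hm⟩ := aux_mem_mmPart.mp hx
  exact aux_levSet_of_pow α m (hWM (hm m le_rfl))

theorem aux_mmPart_mul {α : MulAut G} {W : Subgroup G} {a b : G}
    (ha : a ∈ mmPart α (W : Set G)) (hb : b ∈ mmPart α (W : Set G)) :
    a * b ∈ mmPart α (W : Set G) := by
  obtain ⟨m, hm⟩ := aux_mem_mmPart.mp ha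
  obtain ⟨k, hk⟩ := aux_mem_mmPart.mp hb
  refine aux_mem_mmPart.mpr ⟨max m k, fun n hn => ?_⟩
  rw [map_mul]
  exact W.mul_mem (hm n (le_trans (le_max_left m k) hn)) (hk n (le_trans (le_max_right m k) hn))

theorem aux_mmPart_inv {α : MulAut G} {W : Subgroup G} {a : G}
    (ha : a ∈ mmPart α (W : Set G)) : a⁻¹ ∈ mmPart α (W : Set G) := by
  obtain ⟨m, hm⟩ := aux_mem_mmPart.mp ha
  exact aux_mem_mmPart.mpr ⟨m, fun n hn => by rw [map_inv]; exact W.inv_mem (hm n hn)⟩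

theorem aux_mm_closed [T2Space G] {α : MulAut G} {W O₀ : Subgroup G}
    (hWM : (W : Set G) ⊆ levSet α) (hWcomp : IsCompact (W : Set G))
    (hmmcl : IsClosed ((Subtype.val ⁻¹' mmPart α (W : Set G)) : Set (levSet α)))
    (hO₀o : IsOpen (O₀ : Set G))
    (hO₀W : (O₀ : Set G) ∩ levSet α ⊆ (W : Set G)) :
    closure (mmPart α (W : Set G)) ⊆ mmPart α (W : Set G) := by
  set D := mmPart α (W : Set G) with hDdef
  have hDM : D ⊆ levSet α := aux_mmPart_subset_levSet hWM
  have key : ∀ h ∈ closure D, h ∈ (O₀ : Set G) → h ∈ D := by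
    intro h hcl hO
    have h1 : h ∈ closure ((O₀ : Set G) ∩ D) := hO₀o.inter_closure ⟨hO, hcl⟩
    have h2 : (O₀ : Set G) ∩ D ⊆ (W : Set G) := fun z hz => hO₀W ⟨hz.1, hDM hz.2⟩
    have hW : h ∈ (W : Set G) := closure_minimal h2 hWcomp.isClosed h1
    have hM : h ∈ levSet α := hWM hW
    have hmem : (⟨h, hM⟩ : levSet α) ∈ closure (Subtype.val ⁻¹' D) := by
      rw [closure_subtype]
      rw [Subtype.image_preimage_coe, Set.inter_eq_self_of_subset_right hDM]
      exact hcl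
    rw [hmmcl.closure_eq] at hmem
    exact hmem
  intro h hcl
  have hne : ((h • (O₀ : Set G)) ∩ D).Nonempty :=
    mem_closure_iff.mp hcl _ (hO₀o.smul h) ⟨1, O₀.one_mem, by simp⟩
  obtain ⟨w, hwO, hwD⟩ := hne
  obtain ⟨o, hoO, rfl⟩ := hwO
  simp only [smul_eq_mul] at hwD
  have hwinv_cl : (h * o)⁻¹ * h ∈ closure D := by
    rw [mem_closure_iff]
    intro V hV hmem
    have hh : h ∈ (h * o) • V := ⟨(h * o)⁻¹ * h, hmem, by simp⟩
    obtain ⟨d, hdV, hdD⟩ := mem_closure_iff.mp hcl _ (hV.smul (h * o)) hh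
    obtain ⟨v, hv, rfl⟩ := hdV
    refine ⟨v, hv, ?_⟩
    have hmul := aux_mmPart_mul (aux_mmPart_inv hwD) hdD
    simp only [smul_eq_mul, inv_mul_cancel_left] at hmul
    exact hmul
  have hkey : (h * o)⁻¹ * h ∈ D := by
    refine key _ hwinv_cl ?_
    have : (h * o)⁻¹ * h = o⁻¹ := by group
    rw [this]
    exact O₀.inv_mem hoO
  have := aux_mmPart_mul hwD hkey
  rwa [mul_inv_cancel_left] at this

end AuxMM

/-- For every compact open subgroup `W` of `M_α` tidy for `α|_{M_α}`,
`K ⊆ W₋₋`; consequently `K` is contained in the intersection of the `W₋₋`. -/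
theorem KSet_subset_mmPart
    {G : Type*} [Group G] [TopologicalSpace G] [IsTopologicalGroup G]
    [T2Space G] [LocallyCompactSpace G] [TotallyDisconnectedSpace G]
    (α : MulAut G) (hc : Continuous ⇑α) (hc' : Continuous ⇑α⁻¹) :
    (∀ W : Subgroup G, IsTidyForIn α (levSet α) W → KSet α ⊆ mmPart α (W : Set G)) ∧
      KSet α ⊆ ⋂ W ∈ {W : Subgroup G | IsTidyForIn α (levSet α) W},
        mmPart α (W : Set G) := by
  have main : ∀ W : Subgroup G, IsTidyForIn α (levSet α) W → KSet α ⊆ mmPart α (W : Set G) := by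
    intro W hW
    obtain ⟨hWM, hWcomp, hWopen, _hT1, _hpp, hmm⟩ := hW
    obtain ⟨U, hUopen, hUeq⟩ := isOpen_induced_iff.mp hWopen
    have h1M : (1 : G) ∈ levSet α := by
      have hr : (Set.range fun n : ℤ => (α ^ n) (1 : G)) = {1} := by simp
      simp only [levSet, Set.mem_setOf_eq, hr, isClosed_singleton.closure_eq]
      exact isCompact_singleton
    have h1U : (1 : G) ∈ U := by
      have h0 : (⟨1, h1M⟩ : levSet α) ∈ Subtype.val ⁻¹' (W : Set G) := W.one_mem
      rw [← hUeq] at h0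
      exact h0
    obtain ⟨O₀, hOc, hOo, hOU⟩ := aux_vanDantzig hUopen h1U
    have hO₀W : (O₀ : Set G) ∩ levSet α ⊆ (W : Set G) := by
      rintro g ⟨hgO, hgM⟩
      have h0 : (⟨g, hgM⟩ : levSet α) ∈ Subtype.val ⁻¹' U := hOU hgO
      rw [hUeq] at h0
      exact h0
    intro x hx
    have hxO : x ∈ closure {y ∈ levSet α | ∃ N : ℕ, ∀ n ≥ N, (α ^ n) y ∈ O₀} :=
      Set.mem_iInter₂.mp hx O₀ ⟨hOc, hOo⟩
    have hsub : {y ∈ levSet α | ∃ N : ℕ, ∀ n ≥ N, (α ^ n) y ∈ O₀} ⊆ mmPart α (W : Set G) := by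
      rintro y ⟨hyM, N, hN⟩
      refine aux_mem_mmPart.mpr ⟨N, fun n hn => ?_⟩
      exact hO₀W ⟨hN n hn, aux_levSet_pow α n hyM⟩
    exact aux_mm_closed hWM hWcomp hmm hOo hO₀W ((closure_mono hsub) hxO)
  exact ⟨main, fun x hx => Set.mem_iInter₂.mpr fun W hW => main W hW hx⟩
end

section
/- Let G be a totally disconnected, locally compact Hausdorff topological group and α a bicontinuous automorphism of G. If α|_{M_α} is tidy, then K = {1}, i.e. the intersection over all compact open subgroups O of G of the closures of the sets {x ∈ M_α : α^n(x) ∈ O for all sufficiently large n} is the trivial subgroup. -/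
open Filter Topology Set Pointwise MeasureTheory
open scoped ENNReal

variable {G : Type*} [Group G] [TopologicalSpace G] [IsTopologicalGroup G]

namespace KAux

variable {G : Type*} [Group G] [TopologicalSpace G] [IsTopologicalGroup G]
variable (α : MulAut G)

lemma inv_pow_apply_pow (n : ℕ) (x : G) : (α⁻¹ ^ n) ((α ^ n) x) = x := by
  rw [← MulAut.mul_apply, inv_pow, inv_mul_cancel, MulAut.one_apply]

lemma pow_apply_inv_pow (n : ℕ) (x : G) : (α ^ n) ((α⁻¹ ^ n) x) = x := by
  rw [← MulAut.mul_apply, inv_pow, mul_inv_cancel, MulAut.one_apply]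

lemma continuous_pow {β : MulAut G} (h : Continuous ⇑β) : ∀ n : ℕ, Continuous ⇑(β ^ n)
  | 0 => by
      have : ⇑(β ^ 0) = id := by funext x; simp [pow_zero, MulAut.one_apply]
      rw [this]; exact continuous_id
  | n + 1 => by
      have : ⇑(β ^ (n + 1)) = ⇑(β ^ n) ∘ ⇑β := by
        funext x; rw [Function.comp_apply, ← MulAut.mul_apply, ← pow_succ]
      rw [this]; exact (continuous_pow h n).comp h

lemma image_inv_pow (n : ℕ) (s : Set G) : ⇑(α⁻¹ ^ n) '' s = ⇑(α ^ n) ⁻¹' s := by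
  ext y
  constructor
  · rintro ⟨x, hx, rfl⟩
    show (α ^ n) ((α⁻¹ ^ n) x) ∈ s
    rwa [pow_apply_inv_pow]
  · intro hy
    exact ⟨(α ^ n) y, hy, inv_pow_apply_pow α n y⟩

lemma pow_succ_apply (n : ℕ) (x : G) : (α ^ (n + 1)) x = α ((α ^ n) x) := by
  rw [pow_succ', MulAut.mul_apply]

lemma pow_succ_apply' (n : ℕ) (x : G) : (α ^ (n + 1)) x = (α ^ n) (α x) := by
  rw [pow_succ, MulAut.mul_apply]

lemma zpow_add_one_apply (n : ℤ) (x : G) : (α ^ (n + 1)) x = (α ^ n) (α x) := by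
  rw [zpow_add, zpow_one, MulAut.mul_apply]

lemma zpow_sub_one_apply (n : ℤ) (x : G) : (α ^ (n - 1)) x = (α ^ n) (α⁻¹ x) := by
  rw [sub_eq_add_neg, zpow_add, zpow_neg_one, MulAut.mul_apply]

lemma one_mem_levSet [T1Space G] : (1 : G) ∈ levSet α := by
  have h : (fun n : ℤ => (α ^ n) (1 : G)) = fun _ => (1 : G) := by
    funext n; exact map_one _
  show IsCompact (closure (Set.range fun n : ℤ => (α ^ n) (1 : G)))
  rw [h]
  simp only [Set.range_const, closure_singleton]
  exact isCompact_singleton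

lemma levSet_apply {x : G} (hx : x ∈ levSet α) : α x ∈ levSet α := by
  have h : (Set.range fun n : ℤ => (α ^ n) (α x)) = Set.range fun n : ℤ => (α ^ n) x := by
    ext y
    constructor
    · rintro ⟨n, rfl⟩
      exact ⟨n + 1, zpow_add_one_apply α n x⟩
    · rintro ⟨n, rfl⟩
      refine ⟨n - 1, ?_⟩
      have h2 := zpow_add_one_apply α (n - 1) x
      rw [sub_add_cancel] at h2
      exact h2.symm
  show IsCompact _
  rw [h]
  exact hx

lemma levSet_inv_apply {x : G} (hx : x ∈ levSet α) : α⁻¹ x ∈ levSet α := by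
  have h : (Set.range fun n : ℤ => (α ^ n) (α⁻¹ x)) = Set.range fun n : ℤ => (α ^ n) x := by
    ext y
    constructor
    · rintro ⟨n, rfl⟩
      exact ⟨n - 1, zpow_sub_one_apply α n x⟩
    · rintro ⟨n, rfl⟩
      refine ⟨n + 1, ?_⟩
      have h2 := zpow_sub_one_apply α (n + 1) x
      rw [add_sub_cancel_right] at h2
      exact h2.symm
  show IsCompact _
  rw [h]
  exact hx

end KAux

/-- Van Dantzig's theorem: in a totally disconnected locally compact Hausdorff group,
every neighbourhood of the identity contains a compact open subgroup. -/
lemma exists_compactOpen_subgroup {G : Type*} [Group G] [TopologicalSpace G]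
    [IsTopologicalGroup G] [T2Space G] [LocallyCompactSpace G] [TotallyDisconnectedSpace G]
    {W : Set G} (hWo : IsOpen W) (h1W : (1 : G) ∈ W) :
    ∃ O : Subgroup G, IsCompact (O : Set G) ∧ IsOpen (O : Set G) ∧ (O : Set G) ⊆ W := by
  obtain ⟨C, hCn, hCW, hCc⟩ := local_compact_nhds (hWo.mem_nhds h1W)
  obtain ⟨K, hKclopen, h1K, hKC⟩ :=
    (loc_compact_Haus_tot_disc_of_zero_dim.mem_nhds_iff).mp hCn
  have hKc : IsCompact K := hCc.of_isClosed_subset hKclopen.1 hKC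
  have hKo : IsOpen K := hKclopen.2
  have hKW : K ⊆ W := hKC.trans hCW
  -- a neighbourhood `T` of 1 with `K * T ⊆ K`
  have hmulcl : ∃ T ∈ 𝓝 (1 : G), K * T ⊆ K := by
    apply hKc.induction_on (p := fun S => ∃ T ∈ 𝓝 (1 : G), S * T ⊆ K)
      ⟨Set.univ, Filter.univ_mem, by simp only [Set.empty_mul, Set.empty_subset]⟩
      (fun _ _ huv ⟨T, hT, hsub⟩ => ⟨T, hT, (Set.mul_subset_mul_right huv).trans hsub⟩)
      (fun U V ⟨T₁, hT₁, hm1⟩ ⟨T₂, hT₂, hm2⟩ => ⟨T₁ ∩ T₂, Filter.inter_mem hT₁ hT₂, by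
        rw [Set.union_mul]
        exact Set.union_subset
          ((Set.mul_subset_mul_left Set.inter_subset_left).trans hm1)
          ((Set.mul_subset_mul_left Set.inter_subset_right).trans hm2)⟩)
    intro x memK
    have hx1 : (x, (1 : G)) ∈ (fun p : G × G => p.1 * p.2) ⁻¹' K := by simp [memK]
    rcases isOpen_prod_iff.mp (continuous_mul.isOpen_preimage K hKo) x 1 hx1 with
      ⟨U, V, Uopen, Vopen, xmemU, onememV, prodsub⟩
    have h6 : U * V ⊆ K := Set.mul_subset_iff.mpr fun _ hx _ hy => prodsub (Set.mk_mem_prod hx hy)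
    exact ⟨U ∩ K, ⟨U, Uopen.mem_nhds xmemU, K, fun _ a => a, rfl⟩,
      V, Vopen.mem_nhds onememV, fun _ a => h6 ((Set.mul_subset_mul_right Set.inter_subset_left) a)⟩
  obtain ⟨S, hSn, hSK⟩ := hmulcl
  obtain ⟨U₀, hU₀S, hU₀o, h1U₀⟩ := mem_nhds_iff.mp hSn
  set T : Set G := U₀ ∩ U₀⁻¹ with hTdef
  have hTo : IsOpen T := hU₀o.inter hU₀o.inv
  have h1T : (1 : G) ∈ T := ⟨h1U₀, by simpa using h1U₀⟩
  have hTsymm : T⁻¹ = T := by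
    rw [hTdef, Set.inter_inv, inv_inv, Set.inter_comm]
  have hTS : T ⊆ S := Set.inter_subset_left.trans hU₀S
  have hKT : K * T ⊆ K := (Set.mul_subset_mul_left hTS).trans hSK
  let Osub : Subgroup G :=
    { carrier := ⋃ n : ℕ, T ^ (n + 1)
      mul_mem' := by
        intro a b ha hb
        rcases Set.mem_iUnion.mp ha with ⟨k, hk⟩
        rcases Set.mem_iUnion.mp hb with ⟨l, hl⟩
        apply Set.mem_iUnion.mpr
        refine ⟨k + 1 + l, ?_⟩
        rw [add_assoc, pow_add]
        exact Set.mul_mem_mul hk hl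
      one_mem' := Set.mem_iUnion.mpr ⟨0, by simpa [pow_one] using h1T⟩
      inv_mem' := by
        intro a ha
        rcases Set.mem_iUnion.mp ha with ⟨k, hk⟩
        apply Set.mem_iUnion.mpr
        refine ⟨k, ?_⟩
        rw [← hTsymm]
        simpa only [inv_pow, Set.mem_inv, inv_inv] using hk }
  have hOcoe : (Osub : Set G) = ⋃ n : ℕ, T ^ (n + 1) := rfl
  have hopen : IsOpen (Osub : Set G) := by
    rw [hOcoe]
    refine isOpen_iUnion fun n => ?_
    rw [pow_succ]
    exact hTo.mul_left
  have hsubK : (Osub : Set G) ⊆ K := by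
    rw [hOcoe]
    have mulTpow : ∀ n : ℕ, K * T ^ (n + 1) ⊆ K := by
      intro n
      induction n with
      | zero => simpa [pow_one] using hKT
      | succ m ih =>
          rw [pow_succ, ← mul_assoc]
          exact (Set.mul_subset_mul_right ih).trans hKT
    have hsub : ∀ n : ℕ, T ^ (n + 1) ⊆ K * T ^ (n + 1) := by
      intro n x hx
      exact ⟨1, h1K, x, hx, one_mul x⟩
    exact Set.iUnion_subset fun n a ha => mulTpow n (hsub n ha)
  have hclosed : IsClosed (Osub : Set G) := Subgroup.isClosed_of_isOpen Osub hopen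
  exact ⟨Osub, hKc.of_isClosed_subset hclosed hsubK, hopen, hsubK.trans hKW⟩



/-- If `α|_{M_α}` is tidy, then `K = {1}`. -/
theorem KSet_eq_trivial_of_tidyOn
    {G : Type*} [Group G] [TopologicalSpace G] [IsTopologicalGroup G]
    [T2Space G] [LocallyCompactSpace G] [TotallyDisconnectedSpace G]
    (α : MulAut G) (hc : Continuous ⇑α) (hc' : Continuous ⇑α⁻¹)
    (htidy : IsTidyOn α (levSet α)) :
    KSet α = {1} := by
  have hcont : ∀ n : ℕ, Continuous ⇑(α ^ n) := KAux.continuous_pow hc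
  have hcont' : ∀ n : ℕ, Continuous ⇑(α⁻¹ ^ n) := KAux.continuous_pow hc'
  -- iterated stability of `levSet`
  have hMfwd : ∀ (j : ℕ) (z : G), z ∈ levSet α → (α ^ j) z ∈ levSet α := by
    intro j
    induction j with
    | zero => intro z hz; simpa [pow_zero, MulAut.one_apply] using hz
    | succ n ih =>
        intro z hz
        rw [KAux.pow_succ_apply]
        exact KAux.levSet_apply α (ih z hz)
  have hMbwd : ∀ (j : ℕ) (z : G), z ∈ levSet α → (α⁻¹ ^ j) z ∈ levSet α := by
    intro j
    induction j with
    | zero => intro z hz; simpa [pow_zero, MulAut.one_apply] using hz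
    | succ n ih =>
        intro z hz
        rw [KAux.pow_succ_apply]
        exact KAux.levSet_inv_apply α (ih z hz)
  apply Set.Subset.antisymm
  · -- the hard inclusion `KSet α ⊆ {1}`
    intro x hx
    unfold KSet at hx
    have hxO : ∀ O : Subgroup G, IsCompact (O : Set G) → IsOpen (O : Set G) →
        x ∈ closure {y ∈ levSet α | ∃ N : ℕ, ∀ n ≥ N, (α ^ n) y ∈ O} := by
      intro O h1 h2
      exact Set.mem_iInter₂.mp hx O ⟨h1, h2⟩
    suffices hall : ∀ U ∈ 𝓝 (1 : G), x ∈ U by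
      simp only [Set.mem_singleton_iff]
      by_contra hne
      have h1 : ({x}ᶜ : Set G) ∈ 𝓝 (1 : G) :=
        isOpen_compl_singleton.mem_nhds (by simpa using Ne.symm hne)
      exact (hall _ h1) rfl
    intro U hU
    obtain ⟨V, ⟨hVM, hVc, hVo, -, -, hmmc⟩, hVU⟩ := htidy U hU
    set v : Set G := (V : Set G) with hvdef
    -- the subgroup `V₋`
    set Vneg : Set G := negPart α v with hVnegdef
    have hVneg_eq : Vneg = ⋂ n : ℕ, ⇑(α ^ n) ⁻¹' v := by
      rw [hVnegdef]
      exact Set.iInter_congr fun n => KAux.image_inv_pow α n v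
    have mem_Vneg : ∀ y : G, y ∈ Vneg ↔ ∀ n : ℕ, (α ^ n) y ∈ v := by
      intro y; rw [hVneg_eq]; simp only [Set.mem_iInter, Set.mem_preimage]
    have hVnegv : Vneg ⊆ v := by
      intro y hy
      have h0 := (mem_Vneg y).mp hy 0
      simpa [pow_zero, MulAut.one_apply] using h0
    have hVnegclosed : IsClosed Vneg := by
      rw [hVneg_eq]
      exact isClosed_iInter fun n => hVc.isClosed.preimage (hcont n)
    have hVneg1 : (1 : G) ∈ Vneg := by
      refine (mem_Vneg 1).mpr fun n => ?_
      rw [map_one]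
      exact V.one_mem
    have hVnegmul : ∀ a ∈ Vneg, ∀ b ∈ Vneg, a * b ∈ Vneg := by
      intro a ha b hb
      refine (mem_Vneg _).mpr fun n => ?_
      rw [map_mul]
      exact V.mul_mem ((mem_Vneg a).mp ha n) ((mem_Vneg b).mp hb n)
    have hVneginv : ∀ a ∈ Vneg, a⁻¹ ∈ Vneg := by
      intro a ha
      refine (mem_Vneg _).mpr fun n => ?_
      rw [map_inv]
      exact V.inv_mem ((mem_Vneg a).mp ha n)
    have hVnegstep : ∀ a ∈ Vneg, α a ∈ Vneg := by
      intro a ha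
      refine (mem_Vneg _).mpr fun n => ?_
      rw [← KAux.pow_succ_apply']
      exact (mem_Vneg a).mp ha (n + 1)
    -- the sets `Q k = α^{-k}(V₋)` and `V₋₋`
    set Q : ℕ → Set G := fun k => ⇑(α ^ k) ⁻¹' Vneg with hQdef
    set mm : Set G := mmPart α v with hmmdef
    have hmm_eq : mm = ⋃ k : ℕ, Q k := by
      rw [hmmdef]
      exact Set.iUnion_congr fun n => KAux.image_inv_pow α n (negPart α v)
    have mem_mm : ∀ y : G, y ∈ mm ↔ ∃ k : ℕ, (α ^ k) y ∈ Vneg := by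
      intro y; rw [hmm_eq]; simp only [Set.mem_iUnion, Set.mem_preimage, hQdef]
    have hQmono : Monotone Q := by
      apply monotone_nat_of_le_succ
      intro k y hy
      show (α ^ (k + 1)) y ∈ Vneg
      rw [KAux.pow_succ_apply]
      exact hVnegstep _ hy
    have hQ0 : Vneg ⊆ Q 0 := by
      intro y hy
      show (α ^ 0) y ∈ Vneg
      simpa [pow_zero, MulAut.one_apply] using hy
    have hmmQ : ∀ k, Q k ⊆ mm := fun k y hy => (mem_mm y).mpr ⟨k, hy⟩
    have hVnegmm : Vneg ⊆ mm := hQ0.trans (hmmQ 0)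
    have hmm_mul : ∀ a ∈ mm, ∀ b ∈ mm, a * b ∈ mm := by
      intro a ha b hb
      obtain ⟨k, hk⟩ := (mem_mm a).mp ha
      obtain ⟨l, hl⟩ := (mem_mm b).mp hb
      refine (mem_mm _).mpr ⟨max k l, ?_⟩
      rw [map_mul]
      exact hVnegmul _ (hQmono (le_max_left k l) hk) _ (hQmono (le_max_right k l) hl)
    have hmm_inv : ∀ a ∈ mm, a⁻¹ ∈ mm := by
      intro a ha
      obtain ⟨k, hk⟩ := (mem_mm a).mp ha
      refine (mem_mm _).mpr ⟨k, ?_⟩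
      rw [map_inv]
      exact hVneginv _ hk
    have hmm_alpha : ∀ a ∈ mm, α a ∈ mm := by
      intro a ha
      obtain ⟨k, hk⟩ := (mem_mm a).mp ha
      refine (mem_mm _).mpr ⟨k, ?_⟩
      rw [← KAux.pow_succ_apply', KAux.pow_succ_apply]
      exact hVnegstep _ hk
    have hmm_alphainv : ∀ a ∈ mm, α⁻¹ a ∈ mm := by
      intro a ha
      obtain ⟨k, hk⟩ := (mem_mm a).mp ha
      refine (mem_mm _).mpr ⟨k + 1, ?_⟩
      have h1 : (α ^ (k + 1)) (α⁻¹ a) = (α ^ k) a := by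
        rw [pow_succ, MulAut.mul_apply, MulAut.apply_inv_self]
      rw [h1]
      exact hk
    have hmm_pow : ∀ a ∈ mm, ∀ j : ℕ, (α ^ j) a ∈ mm := by
      intro a ha j
      induction j with
      | zero => simpa [pow_zero, MulAut.one_apply] using ha
      | succ n ih => rw [KAux.pow_succ_apply]; exact hmm_alpha _ ih
    have hmm_ipow : ∀ a ∈ mm, ∀ j : ℕ, (α⁻¹ ^ j) a ∈ mm := by
      intro a ha j
      induction j with
      | zero => simpa [pow_zero, MulAut.one_apply] using ha
      | succ n ih => rw [KAux.pow_succ_apply]; exact hmm_alphainv _ ih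
    have hmmM : mm ⊆ levSet α := by
      intro y hy
      obtain ⟨k, hk⟩ := (mem_mm y).mp hy
      have h1 : (α ^ k) y ∈ levSet α := hVM (hVnegv hk)
      have h2 : (α⁻¹ ^ k) ((α ^ k) y) ∈ levSet α := hMbwd k _ h1
      rwa [KAux.inv_pow_apply_pow] at h2
    -- extract the open set `W` with `levSet α ∩ W = V`
    obtain ⟨W, hWo, hWpre⟩ := isOpen_induced_iff.mp hVo
    have hMW : levSet α ∩ W = v := by
      apply Set.Subset.antisymm
      · rintro y ⟨hyM, hyW⟩
        have h3 := Set.ext_iff.mp hWpre ⟨y, hyM⟩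
        simp only [Set.mem_preimage] at h3
        exact h3.mp hyW
      · intro y hyv
        have hyM : y ∈ levSet α := hVM hyv
        have h3 := Set.ext_iff.mp hWpre ⟨y, hyM⟩
        simp only [Set.mem_preimage] at h3
        exact ⟨hyM, h3.mpr hyv⟩
    have h1W : (1 : G) ∈ W := by
      have h1v : (1 : G) ∈ v := V.one_mem
      rw [← hMW] at h1v
      exact h1v.2
    -- extract the closed set `F` with `levSet α ∩ F = V₋₋`
    obtain ⟨F, hFc, hFpre⟩ := isClosed_induced_iff.mp hmmc
    have hMF : levSet α ∩ F = mm := by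
      apply Set.Subset.antisymm
      · rintro y ⟨hyM, hyF⟩
        have h3 := Set.ext_iff.mp hFpre ⟨y, hyM⟩
        simp only [Set.mem_preimage] at h3
        exact h3.mp hyF
      · intro y hymm
        have hyM : y ∈ levSet α := hmmM hymm
        have h3 := Set.ext_iff.mp hFpre ⟨y, hyM⟩
        simp only [Set.mem_preimage] at h3
        exact ⟨hyM, h3.mpr hymm⟩
    -- van Dantzig
    obtain ⟨O, hOcpt, hOopen, hOW⟩ := exists_compactOpen_subgroup hWo h1W
    set S : Set G := {y ∈ levSet α | ∃ N : ℕ, ∀ n ≥ N, (α ^ n) y ∈ O} with hSdef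
    have hxS : x ∈ closure S := hxO O hOcpt hOopen
    have hSmm : S ⊆ mm := by
      rintro y ⟨hyM, N, hN⟩
      refine (mem_mm y).mpr ⟨N, (mem_Vneg _).mpr fun m => ?_⟩
      have h1 : (α ^ m) ((α ^ N) y) = (α ^ (m + N)) y := by
        rw [← MulAut.mul_apply, ← pow_add]
      rw [h1]
      have hO : (α ^ (m + N)) y ∈ (O : Set G) := hN (m + N) le_add_self
      have hM : (α ^ (m + N)) y ∈ levSet α := hMfwd _ _ hyM
      have h2 : (α ^ (m + N)) y ∈ levSet α ∩ W := ⟨hM, hOW hO⟩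
      rwa [hMW] at h2
    -- stability of `S` and of `closure S`
    have hSstep : ∀ y ∈ S, α y ∈ S := by
      rintro y ⟨hyM, N, hN⟩
      refine ⟨KAux.levSet_apply α hyM, N, fun n hn => ?_⟩
      have h1 : (α ^ n) (α y) = (α ^ (n + 1)) y := (KAux.pow_succ_apply' α n y).symm
      rw [h1]
      exact hN (n + 1) (le_trans hn (Nat.le_succ n))
    have hSstep' : ∀ y ∈ S, α⁻¹ y ∈ S := by
      rintro y ⟨hyM, N, hN⟩
      refine ⟨KAux.levSet_inv_apply α hyM, N + 1, fun n hn => ?_⟩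
      obtain ⟨m, rfl⟩ : ∃ m, n = m + 1 :=
        ⟨n - 1, (Nat.succ_pred_eq_of_pos (lt_of_lt_of_le (Nat.succ_pos N) hn)).symm⟩
      have h1 : (α ^ (m + 1)) (α⁻¹ y) = (α ^ m) y := by
        rw [pow_succ, MulAut.mul_apply, MulAut.apply_inv_self]
      rw [h1]
      exact hN m (Nat.le_of_succ_le_succ hn)
    have hclS : ∀ y ∈ closure S, α y ∈ closure S := by
      intro y hy
      have h1 : ⇑α '' closure S ⊆ closure (⇑α '' S) := image_closure_subset_closure_image hc
      have h2 : closure (⇑α '' S) ⊆ closure S := by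
        apply closure_mono
        rintro _ ⟨z, hz, rfl⟩
        exact hSstep z hz
      exact h2 (h1 ⟨y, hy, rfl⟩)
    have hclS' : ∀ y ∈ closure S, α⁻¹ y ∈ closure S := by
      intro y hy
      have h1 : ⇑α⁻¹ '' closure S ⊆ closure (⇑α⁻¹ '' S) := image_closure_subset_closure_image hc'
      have h2 : closure (⇑α⁻¹ '' S) ⊆ closure S := by
        apply closure_mono
        rintro _ ⟨z, hz, rfl⟩
        exact hSstep' z hz
      exact h2 (h1 ⟨y, hy, rfl⟩)
    have hxZorbit : ∀ j : ℤ, (α ^ j) x ∈ closure S := by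
      intro j
      induction j using Int.induction_on with
      | zero => simpa [zpow_zero, MulAut.one_apply] using hxS
      | succ n ih =>
          have h1 : (α ^ ((n : ℤ) + 1)) x = α ((α ^ (n : ℤ)) x) := by
            rw [add_comm, zpow_add, zpow_one, MulAut.mul_apply]
          rw [h1]
          exact hclS _ ih
      | pred n ih =>
          have h1 : (α ^ (-(n : ℤ) - 1)) x = α⁻¹ ((α ^ (-(n : ℤ))) x) := by
            have h2 : (-(n : ℤ) - 1) = -1 + -(n : ℤ) := by ring
            rw [h2, zpow_add, zpow_neg_one, MulAut.mul_apply]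
          rw [h1]
          exact hclS' _ ih
    -- Baire category argument: find an open `Ω ∋ 1` with `Ω ∩ mm ⊆ Vneg`
    set H : Set G := v ∩ mm with hHdef
    have hHF : H = v ∩ F := by
      rw [hHdef, ← hMF]
      ext y
      constructor
      · rintro ⟨h1, h2, h3⟩; exact ⟨h1, h3⟩
      · rintro ⟨h1, h2⟩; exact ⟨h1, hVM h1, h2⟩
    have hHcpt : IsCompact H := by rw [hHF]; exact hVc.inter_right hFc
    have hH1 : (1 : G) ∈ H := ⟨V.one_mem, hVnegmm hVneg1⟩
    haveI : CompactSpace ↥H := isCompact_iff_compactSpace.mp hHcpt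
    haveI : Nonempty ↥H := ⟨⟨1, hH1⟩⟩
    have hcover : (⋃ k : ℕ, (Subtype.val ⁻¹' Q k : Set ↥H)) = Set.univ := by
      rw [Set.eq_univ_iff_forall]
      rintro ⟨y, hyv, hymm⟩
      obtain ⟨k, hk⟩ := (mem_mm y).mp hymm
      exact Set.mem_iUnion.mpr ⟨k, hk⟩
    have hclosedk : ∀ k : ℕ, IsClosed (Subtype.val ⁻¹' Q k : Set ↥H) := fun k =>
      ((hVnegclosed.preimage (hcont k)).preimage continuous_subtype_val)
    obtain ⟨k, hkne⟩ := nonempty_interior_of_iUnion_of_closed hclosedk hcover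
    obtain ⟨⟨h₀, hh₀H⟩, hh₀int⟩ := hkne
    rw [mem_interior_iff_mem_nhds, nhds_induced, Filter.mem_comap] at hh₀int
    obtain ⟨T, hTn, hTsub⟩ := hh₀int
    obtain ⟨N, hNT, hNo, hh₀N⟩ := mem_nhds_iff.mp hTn
    have hNH : ∀ y, y ∈ H → y ∈ N → y ∈ Q k := by
      intro y hy hyN
      exact hTsub (show (⟨y, hy⟩ : ↥H) ∈ Subtype.val ⁻¹' T from hNT hyN)
    have hh₀Q : h₀ ∈ Q k := hNH h₀ hh₀H hh₀N
    have hh₀v : h₀ ∈ v := hh₀H.1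
    set Ω₀ : Set G := ((fun g => h₀ * g) ⁻¹' N) ∩ W with hΩ₀def
    have hΩ₀o : IsOpen Ω₀ := (hNo.preimage (continuous_const.mul continuous_id)).inter hWo
    have h1Ω₀ : (1 : G) ∈ Ω₀ := ⟨by simpa using hh₀N, h1W⟩
    have hΩ₀Q : ∀ y, y ∈ Ω₀ → y ∈ mm → y ∈ Q k := by
      rintro y ⟨hyN, hyW⟩ hymm
      have hyv : y ∈ v := by
        rw [← hMW]
        exact ⟨hmmM hymm, hyW⟩
      have hy' : h₀ * y ∈ H := ⟨V.mul_mem hh₀v hyv, hmm_mul _ (hmmQ k hh₀Q) _ hymm⟩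
      have h2 : h₀ * y ∈ Q k := hNH _ hy' hyN
      show (α ^ k) y ∈ Vneg
      have hkey : (α ^ k) y = ((α ^ k) h₀)⁻¹ * (α ^ k) (h₀ * y) := by
        rw [map_mul, inv_mul_cancel_left]
      rw [hkey]
      exact hVnegmul _ (hVneginv _ hh₀Q) _ h2
    set Ω₁ : Set G := ⇑(α⁻¹ ^ k) ⁻¹' Ω₀ with hΩ₁def
    have hΩ₁o : IsOpen Ω₁ := hΩ₀o.preimage (hcont' k)
    have h1Ω₁ : (1 : G) ∈ Ω₁ := by
      show (α⁻¹ ^ k) 1 ∈ Ω₀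
      rw [map_one]
      exact h1Ω₀
    have hΩ₁neg : ∀ y, y ∈ Ω₁ → y ∈ mm → y ∈ Vneg := by
      intro y hy hymm
      have h1 : (α⁻¹ ^ k) y ∈ mm := hmm_ipow y hymm k
      have h2 : (α⁻¹ ^ k) y ∈ Q k := hΩ₀Q _ hy h1
      have h3 : (α ^ k) ((α⁻¹ ^ k) y) ∈ Vneg := h2
      rwa [KAux.pow_apply_inv_pow] at h3
    set Ω : Set G := ⋃ w ∈ Vneg, (fun g => w⁻¹ * g) ⁻¹' Ω₁ with hΩdef
    have hΩo : IsOpen Ω :=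
      isOpen_biUnion fun w _ => hΩ₁o.preimage (continuous_const.mul continuous_id)
    have hVnegΩ : Vneg ⊆ Ω := by
      intro w hw
      refine Set.mem_biUnion hw ?_
      show w⁻¹ * w ∈ Ω₁
      rw [inv_mul_cancel]
      exact h1Ω₁
    have hΩneg : ∀ y, y ∈ Ω → y ∈ mm → y ∈ Vneg := by
      intro y hy hymm
      obtain ⟨w, hw, hyw⟩ := Set.mem_iUnion₂.mp hy
      have h1 : w⁻¹ * y ∈ mm := hmm_mul _ (hmm_inv _ (hVnegmm hw)) _ hymm
      have h2 : w⁻¹ * y ∈ Vneg := hΩ₁neg _ hyw h1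
      have h3 : y = w * (w⁻¹ * y) := (mul_inv_cancel_left w y).symm
      rw [h3]
      exact hVnegmul _ hw _ h2
    -- `closure mm = mm`
    set mmSub : Subgroup G :=
      { carrier := mm
        mul_mem' := fun ha hb => hmm_mul _ ha _ hb
        one_mem' := hVnegmm hVneg1
        inv_mem' := fun ha => hmm_inv _ ha } with hmmSubdef
    have hDsub : ∀ a ∈ closure mm, ∀ b ∈ closure mm, a⁻¹ * b ∈ closure mm := by
      intro a ha b hb
      have h1 : a ∈ mmSub.topologicalClosure := by
        rw [← SetLike.mem_coe, Subgroup.topologicalClosure_coe]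
        exact ha
      have h2 : b ∈ mmSub.topologicalClosure := by
        rw [← SetLike.mem_coe, Subgroup.topologicalClosure_coe]
        exact hb
      have h3 := mul_mem (inv_mem h1) h2
      rw [← SetLike.mem_coe, Subgroup.topologicalClosure_coe] at h3
      exact h3
    have hdense : ∀ Ω' : Set G, IsOpen Ω' → ∀ z ∈ closure mm, z ∈ Ω' →
        z ∈ closure (Ω' ∩ mm) := by
      intro Ω' hΩ'o z hz hzΩ
      rw [mem_closure_iff] at hz ⊢
      intro o ho hzo
      obtain ⟨y, ⟨⟨hyo, hyΩ⟩, hymm⟩⟩ := hz (o ∩ Ω') (ho.inter hΩ'o) ⟨hzo, hzΩ⟩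
      exact ⟨y, hyo, hyΩ, hymm⟩
    have hDmm : closure mm ⊆ mm := by
      intro d hd
      set T' : Set G := (fun g => (d⁻¹ * g)⁻¹) ⁻¹' Ω with hT'def
      have hT'o : IsOpen T' := hΩo.preimage ((continuous_const.mul continuous_id).inv)
      have hdT' : d ∈ T' := by
        show (d⁻¹ * d)⁻¹ ∈ Ω
        rw [inv_mul_cancel, inv_one]
        exact hVnegΩ hVneg1
      obtain ⟨y, hyT', hymm⟩ := mem_closure_iff.mp hd T' hT'o hdT'
      have hω : y⁻¹ * d ∈ Ω := by
        have : ((d⁻¹ * y)⁻¹ : G) = y⁻¹ * d := by rw [mul_inv_rev, inv_inv]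
        rw [← this]
        exact hyT'
      have hωD : y⁻¹ * d ∈ closure mm := hDsub y (subset_closure hymm) d hd
      have hωcl : y⁻¹ * d ∈ closure (Ω ∩ mm) := hdense Ω hΩo _ hωD hω
      have hsubV : Ω ∩ mm ⊆ Vneg := fun z hz => hΩneg z hz.1 hz.2
      have hωV : y⁻¹ * d ∈ Vneg := by
        have h4 := closure_mono hsubV hωcl
        rwa [hVnegclosed.closure_eq] at h4
      have h5 : d = y * (y⁻¹ * d) := (mul_inv_cancel_left y d).symm
      rw [h5]
      exact hmm_mul _ hymm _ (hVnegmm hωV)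
    -- conclude
    have hxmm : x ∈ mm := hDmm (closure_mono hSmm hxS)
    have hxM : x ∈ levSet α := hmmM hxmm
    set Z : Set G := closure (Set.range fun n : ℤ => (α ^ n) x) with hZdef
    have hZc : IsCompact Z := hxM
    have hrange : (Set.range fun n : ℤ => (α ^ n) x) ⊆ closure mm := by
      rintro y ⟨n, rfl⟩
      exact closure_mono hSmm (hxZorbit n)
    have hZmm : Z ⊆ mm := by
      intro z hz
      apply hDmm
      have h1 : Z ⊆ closure (closure mm) := closure_mono hrange
      rw [closure_closure] at h1
      exact h1 hz
    have hZcov : Z ⊆ ⋃ k : ℕ, ⇑(α ^ k) ⁻¹' Ω := by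
      intro z hz
      obtain ⟨k', hk'⟩ := (mem_mm z).mp (hZmm hz)
      exact Set.mem_iUnion.mpr ⟨k', hVnegΩ hk'⟩
    obtain ⟨t, ht⟩ := hZc.elim_finite_subcover (fun k : ℕ => ⇑(α ^ k) ⁻¹' Ω)
      (fun k => hΩo.preimage (hcont k)) hZcov
    set k₀ : ℕ := t.sup id with hk₀def
    have hZQ : Z ⊆ Q k₀ := by
      intro z hz
      obtain ⟨k', hk't, hk'⟩ := Set.mem_iUnion₂.mp (ht hz)
      have h1 : (α ^ k') z ∈ mm := hmm_pow z (hZmm hz) k'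
      have h2 : z ∈ Q k' := hΩneg _ hk' h1
      exact hQmono (Finset.le_sup (f := id) hk't) h2
    have hz₀ : (α ^ (-(k₀ : ℤ))) x ∈ Z := subset_closure ⟨-(k₀ : ℤ), rfl⟩
    have h3 : (α ^ k₀) ((α ^ (-(k₀ : ℤ))) x) ∈ Vneg := hZQ hz₀
    have h4 : (α ^ k₀) ((α ^ (-(k₀ : ℤ))) x) = x := by
      rw [← zpow_natCast α k₀, ← MulAut.mul_apply, ← zpow_add, add_neg_cancel, zpow_zero,
        MulAut.one_apply]
    rw [h4] at h3
    exact hVU (hVnegv h3)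
  · -- `{1} ⊆ KSet α`
    intro y hy
    rw [Set.mem_singleton_iff] at hy
    subst hy
    unfold KSet
    refine Set.mem_iInter₂.mpr fun O hO => subset_closure ⟨KAux.one_mem_levSet α, 0, fun n _ => ?_⟩
    show (α ^ n) 1 ∈ O
    rw [map_one]
    exact O.one_mem
end

section
/- Let G be a totally disconnected, locally compact Hausdorff topological group and α a bicontinuous automorphism of G. Then α is tidy (G has small subgroups tidy for α) if and only if the restriction α|_{M_α} is tidy (M_α has small subgroups tidy for α|_{M_α}). -/
open Filter Topology Set Pointwise MeasureTheory
open scoped ENNReal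

variable {G : Type*} [Group G] [TopologicalSpace G] [IsTopologicalGroup G]

/-! ### Auxiliary machinery -/

section TidyAux

set_option linter.unusedSectionVars false

variable {G : Type*} [Group G] [TopologicalSpace G] [IsTopologicalGroup G] [T2Space G]

namespace TidyAux

/-! #### Basic `MulAut` power calculus -/

lemma inv_pow_apply_pow (β : MulAut G) (n : ℕ) (x : G) : (β⁻¹ ^ n) ((β ^ n) x) = x := by
  rw [inv_pow, MulAut.inv_def, MulEquiv.symm_apply_apply]

lemma pow_apply_inv_pow (β : MulAut G) (n : ℕ) (x : G) : (β ^ n) ((β⁻¹ ^ n) x) = x := by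
  rw [inv_pow, MulAut.inv_def, MulEquiv.apply_symm_apply]

lemma image_pow_eq_preimage (β : MulAut G) (n : ℕ) (S : Set G) :
    ⇑(β ^ n) '' S = ⇑(β⁻¹ ^ n) ⁻¹' S :=
  congrFun (Set.image_eq_preimage_of_inverse (fun x => inv_pow_apply_pow β n x)
    (fun x => pow_apply_inv_pow β n x)) S

lemma mem_image_pow {β : MulAut G} {n : ℕ} {S : Set G} {x : G} :
    x ∈ ⇑(β ^ n) '' S ↔ (β⁻¹ ^ n) x ∈ S := by
  rw [image_pow_eq_preimage]; rfl

lemma mem_image_pow' {β : MulAut G} {n : ℕ} {S : Set G} {x : G} :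
    x ∈ ⇑(β⁻¹ ^ n) '' S ↔ (β ^ n) x ∈ S := by
  rw [image_pow_eq_preimage, inv_inv]; rfl

lemma continuous_pow {β : MulAut G} (hβ : Continuous ⇑β) (n : ℕ) : Continuous ⇑(β ^ n) := by
  induction n with
  | zero => simpa using continuous_id
  | succ n ih =>
      have : ⇑(β ^ (n + 1)) = ⇑(β ^ n) ∘ ⇑β := by
        funext x; rw [Function.comp_apply, pow_succ, MulAut.mul_apply]
      rw [this]; exact ih.comp hβ

lemma isClosed_image_pow {β : MulAut G} (hβ' : Continuous ⇑β⁻¹) (n : ℕ) {S : Set G}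
    (hS : IsClosed S) : IsClosed (⇑(β ^ n) '' S) := by
  rw [image_pow_eq_preimage]
  exact hS.preimage (continuous_pow hβ' n)

lemma isOpen_image_pow {β : MulAut G} (hβ' : Continuous ⇑β⁻¹) (n : ℕ) {S : Set G}
    (hS : IsOpen S) : IsOpen (⇑(β ^ n) '' S) := by
  rw [image_pow_eq_preimage]
  exact hS.preimage (continuous_pow hβ' n)

lemma isCompact_image_pow {β : MulAut G} (hβ : Continuous ⇑β) (n : ℕ) {S : Set G}
    (hS : IsCompact S) : IsCompact (⇑(β ^ n) '' S) :=
  hS.image (continuous_pow hβ n)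

lemma image_pow_mul (β : MulAut G) (n : ℕ) (S T : Set G) :
    ⇑(β ^ n) '' (S * T) = (⇑(β ^ n) '' S) * (⇑(β ^ n) '' T) :=
  Set.image_mul (β ^ n).toMonoidHom

lemma image_pow_subset_image_pow {β : MulAut G} {n : ℕ} {S T : Set G} (h : S ⊆ T) :
    ⇑(β ^ n) '' S ⊆ ⇑(β ^ n) '' T := Set.image_mono h

/-- subgroup-like set: nonempty, closed under `mul` and `inv`. -/
structure IsSubgroupSet (S : Set G) : Prop where
  one_mem : (1 : G) ∈ S
  mul_mem : ∀ {x y}, x ∈ S → y ∈ S → x * y ∈ S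
  inv_mem : ∀ {x}, x ∈ S → x⁻¹ ∈ S

namespace IsSubgroupSet

lemma coe (H : Subgroup G) : IsSubgroupSet (H : Set G) :=
  ⟨H.one_mem, fun hx hy => H.mul_mem hx hy, fun hx => H.inv_mem hx⟩

lemma iInter {ι : Sort*} [Nonempty ι] {S : ι → Set G} (h : ∀ i, IsSubgroupSet (S i)) :
    IsSubgroupSet (⋂ i, S i) := by
  refine ⟨Set.mem_iInter.2 fun i => (h i).one_mem, fun hx hy => Set.mem_iInter.2 fun i => ?_,
    fun hx => Set.mem_iInter.2 fun i => ?_⟩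
  · exact (h i).mul_mem (Set.mem_iInter.1 hx i) (Set.mem_iInter.1 hy i)
  · exact (h i).inv_mem (Set.mem_iInter.1 hx i)

lemma inter {S T : Set G} (hS : IsSubgroupSet S) (hT : IsSubgroupSet T) :
    IsSubgroupSet (S ∩ T) :=
  ⟨⟨hS.one_mem, hT.one_mem⟩, fun hx hy => ⟨hS.mul_mem hx.1 hy.1, hT.mul_mem hx.2 hy.2⟩,
    fun hx => ⟨hS.inv_mem hx.1, hT.inv_mem hx.2⟩⟩

lemma image_pow {β : MulAut G} {S : Set G} (hS : IsSubgroupSet S) (n : ℕ) :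
    IsSubgroupSet (⇑(β ^ n) '' S) := by
  constructor
  · exact ⟨1, hS.one_mem, map_one _⟩
  · rintro x y ⟨a, ha, rfl⟩ ⟨b, hb, rfl⟩
    exact ⟨a * b, hS.mul_mem ha hb, map_mul _ a b⟩
  · rintro x ⟨a, ha, rfl⟩
    exact ⟨a⁻¹, hS.inv_mem ha, map_inv _ a⟩

lemma mul_self {S : Set G} (hS : IsSubgroupSet S) : S * S = S := by
  apply Set.Subset.antisymm
  · rintro x ⟨a, ha, b, hb, rfl⟩; exact hS.mul_mem ha hb
  · intro x hx; exact ⟨1, hS.one_mem, x, hx, one_mul x⟩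

lemma absorb_left {S T : Set G} (hT : IsSubgroupSet T) (h : S ⊆ T) (hne : S.Nonempty) :
    S * T = T := by
  apply Set.Subset.antisymm
  · rintro x ⟨a, ha, b, hb, rfl⟩; exact hT.mul_mem (h ha) hb
  · intro x hx
    obtain ⟨s, hs⟩ := hne
    exact ⟨s, hs, s⁻¹ * x, hT.mul_mem (hT.inv_mem (h hs)) hx, by group⟩

lemma absorb_right {S T : Set G} (hT : IsSubgroupSet T) (h : S ⊆ T) (hne : S.Nonempty) :
    T * S = T := by
  apply Set.Subset.antisymm
  · rintro x ⟨a, ha, b, hb, rfl⟩; exact hT.mul_mem ha (h hb)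
  · intro x hx
    obtain ⟨s, hs⟩ := hne
    exact ⟨x * s⁻¹, hT.mul_mem hx (hT.inv_mem (h hs)), s, hs, by group⟩

lemma toSubgroup {S : Set G} (hS : IsSubgroupSet S) : ∃ H : Subgroup G, (H : Set G) = S :=
  ⟨{ carrier := S, one_mem' := hS.one_mem, mul_mem' := fun ha hb => hS.mul_mem ha hb,
     inv_mem' := fun ha => hS.inv_mem ha }, rfl⟩

end IsSubgroupSet


/-! #### `zpow` calculus and `levSet` -/

lemma zpow_natCast_apply (β : MulAut G) (m : ℕ) (x : G) : (β ^ (m : ℤ)) x = (β ^ m) x := by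
  rw [zpow_natCast]

lemma zpow_neg_natCast_apply (β : MulAut G) (m : ℕ) (x : G) :
    (β ^ (-(m : ℤ))) x = (β⁻¹ ^ m) x := by
  rw [zpow_neg, ← inv_zpow, zpow_natCast]

lemma zpow_add_apply (β : MulAut G) (m n : ℤ) (x : G) :
    (β ^ (m + n)) x = (β ^ m) ((β ^ n) x) := by
  rw [zpow_add, MulAut.mul_apply]

lemma range_zpow_split (β : MulAut G) (x : G) :
    (Set.range fun n : ℤ => (β ^ n) x) =
      (Set.range fun m : ℕ => (β ^ m) x) ∪ (Set.range fun m : ℕ => (β⁻¹ ^ m) x) := by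
  ext y
  constructor
  · rintro ⟨n, rfl⟩
    rcases le_or_gt 0 n with hn | hn
    · obtain ⟨m, rfl⟩ := Int.eq_ofNat_of_zero_le hn
      exact Or.inl ⟨m, (zpow_natCast_apply β m x).symm⟩
    · obtain ⟨m, rfl⟩ : ∃ m : ℕ, n = -(m : ℤ) := ⟨n.natAbs, by omega⟩
      exact Or.inr ⟨m, (zpow_neg_natCast_apply β m x).symm⟩
  · rintro (⟨m, rfl⟩ | ⟨m, rfl⟩)
    · exact ⟨(m : ℤ), zpow_natCast_apply β m x⟩
    · exact ⟨-(m : ℤ), zpow_neg_natCast_apply β m x⟩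

lemma mem_levSet_of_forall {β : MulAut G} {x : G} {K : Set G} (hK : IsCompact K)
    (h : ∀ n : ℤ, (β ^ n) x ∈ K) : x ∈ levSet β := by
  refine IsCompact.of_isClosed_subset hK isClosed_closure
    (closure_minimal ?_ hK.isClosed)
  rintro _ ⟨n, rfl⟩; exact h n

lemma orbit_mem_closure {β : MulAut G} (x : G) (n : ℤ) :
    (β ^ n) x ∈ closure (Set.range fun n : ℤ => (β ^ n) x) :=
  subset_closure ⟨n, rfl⟩

lemma levSet_inv (β : MulAut G) : levSet β⁻¹ = levSet β := by
  have key : ∀ x : G, (Set.range fun n : ℤ => (β⁻¹ ^ n) x) =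
      (Set.range fun n : ℤ => (β ^ n) x) := by
    intro x
    ext y
    constructor
    · rintro ⟨n, rfl⟩; exact ⟨-n, by simp [inv_zpow', neg_neg]⟩
    · rintro ⟨n, rfl⟩; exact ⟨-n, by simp [inv_zpow', neg_neg]⟩
  unfold levSet
  ext x
  rw [Set.mem_setOf_eq, Set.mem_setOf_eq, key]

lemma isSubgroupSet_levSet (β : MulAut G) : IsSubgroupSet (levSet β) := by
  constructor
  · refine mem_levSet_of_forall (K := {1}) isCompact_singleton fun n => ?_
    simp [Set.mem_singleton_iff, map_one]
  · intro x y hx hy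
    refine mem_levSet_of_forall (hx.mul hy) fun n => ?_
    rw [map_mul]
    exact Set.mul_mem_mul (orbit_mem_closure x n) (orbit_mem_closure y n)
  · intro x hx
    refine mem_levSet_of_forall hx.inv fun n => ?_
    rw [map_inv]
    exact Set.inv_mem_inv.2 (orbit_mem_closure x n)

lemma levSet_zpow_mem {β : MulAut G} {x : G} (hx : x ∈ levSet β) (k : ℤ) :
    (β ^ k) x ∈ levSet β := by
  refine mem_levSet_of_forall hx fun n => ?_
  rw [← zpow_add_apply]
  exact orbit_mem_closure x (n + k)

lemma levSet_pow_mem {β : MulAut G} {x : G} (hx : x ∈ levSet β) (k : ℕ) :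
    (β ^ k) x ∈ levSet β := by
  rw [← zpow_natCast_apply]; exact levSet_zpow_mem hx k

lemma levSet_inv_pow_mem {β : MulAut G} {x : G} (hx : x ∈ levSet β) (k : ℕ) :
    (β⁻¹ ^ k) x ∈ levSet β := by
  rw [← zpow_neg_natCast_apply]; exact levSet_zpow_mem hx (-(k : ℤ))

/-! #### `posPart` and `ppPart` basics -/

lemma image_pow_zero (β : MulAut G) (S : Set G) : ⇑(β ^ 0) '' S = S := by
  simp [pow_zero]

lemma mem_posPart {β : MulAut G} {S : Set G} {x : G} :
    x ∈ posPart β S ↔ ∀ n : ℕ, (β⁻¹ ^ n) x ∈ S := by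
  rw [show posPart β S = ⋂ n : ℕ, ⇑(β ^ n) '' S from rfl, Set.mem_iInter]
  exact forall_congr' fun n => mem_image_pow

lemma posPart_subset {β : MulAut G} {S : Set G} : posPart β S ⊆ S := by
  intro x hx
  have := mem_posPart.1 hx 0
  simpa using this

lemma negPart_eq_posPart_inv (α : MulAut G) (S : Set G) : negPart α S = posPart α⁻¹ S := rfl

lemma mmPart_eq_ppPart_inv (α : MulAut G) (S : Set G) : mmPart α S = ppPart α⁻¹ S := rfl

lemma posPart_eq_negPart_inv (α : MulAut G) (S : Set G) : posPart α S = negPart α⁻¹ S := by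
  rw [negPart_eq_posPart_inv, inv_inv]

lemma ppPart_eq_mmPart_inv (α : MulAut G) (S : Set G) : ppPart α S = mmPart α⁻¹ S := by
  rw [mmPart_eq_ppPart_inv, inv_inv]

lemma isSubgroupSet_posPart {β : MulAut G} {S : Set G} (hS : IsSubgroupSet S) :
    IsSubgroupSet (posPart β S) :=
  IsSubgroupSet.iInter fun n => hS.image_pow n

lemma isClosed_posPart {β : MulAut G} (hβ' : Continuous ⇑β⁻¹) {S : Set G} (hS : IsClosed S) :
    IsClosed (posPart β S) :=
  isClosed_iInter fun n => isClosed_image_pow hβ' n hS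

lemma isCompact_posPart {β : MulAut G} (hβ' : Continuous ⇑β⁻¹) {S : Set G} [T2Space G]
    (hS : IsCompact S) : IsCompact (posPart β S) :=
  IsCompact.of_isClosed_subset hS (isClosed_posPart hβ' hS.isClosed) posPart_subset

lemma posPart_subset_image {β : MulAut G} {S : Set G} :
    posPart β S ⊆ ⇑β '' posPart β S := by
  intro x hx
  refine ⟨β⁻¹ x, ?_, by rw [MulAut.inv_def, MulEquiv.apply_symm_apply]⟩
  rw [mem_posPart]
  intro n
  have := mem_posPart.1 hx (n + 1)
  rw [pow_succ, MulAut.mul_apply] at this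
  exact this

lemma image_pow_posPart_mono {β : MulAut G} {S : Set G} {m n : ℕ} (h : m ≤ n) :
    ⇑(β ^ m) '' posPart β S ⊆ ⇑(β ^ n) '' posPart β S := by
  induction n with
  | zero => rw [Nat.le_zero.1 h]
  | succ n ih =>
      rcases Nat.lt_or_ge m (n + 1) with hm | hm
      · refine (ih (by omega)).trans ?_
        intro x hx
        obtain ⟨y, hy, rfl⟩ := hx
        obtain ⟨z, hz, hzy⟩ := posPart_subset_image hy
        refine ⟨z, hz, ?_⟩
        rw [pow_succ, MulAut.mul_apply, hzy]
      · have : m = n + 1 := by omega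
        rw [this]

lemma mem_ppPart {β : MulAut G} {S : Set G} {x : G} :
    x ∈ ppPart β S ↔ ∃ n : ℕ, x ∈ ⇑(β ^ n) '' posPart β S := by
  rw [show ppPart β S = ⋃ n : ℕ, ⇑(β ^ n) '' posPart β S from rfl, Set.mem_iUnion]

lemma isSubgroupSet_ppPart {β : MulAut G} {S : Set G} (hS : IsSubgroupSet S) :
    IsSubgroupSet (ppPart β S) := by
  constructor
  · exact mem_ppPart.2 ⟨0, ((isSubgroupSet_posPart hS).image_pow 0).one_mem⟩
  · intro x y hx hy
    obtain ⟨m, hm⟩ := mem_ppPart.1 hx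
    obtain ⟨n, hn⟩ := mem_ppPart.1 hy
    refine mem_ppPart.2 ⟨max m n, ((isSubgroupSet_posPart hS).image_pow (max m n)).mul_mem
      (image_pow_posPart_mono (le_max_left m n) hm)
      (image_pow_posPart_mono (le_max_right m n) hn)⟩
  · intro x hx
    obtain ⟨m, hm⟩ := mem_ppPart.1 hx
    exact mem_ppPart.2 ⟨m, ((isSubgroupSet_posPart hS).image_pow m).inv_mem hm⟩

lemma posPart_subset_ppPart {β : MulAut G} {S : Set G} : posPart β S ⊆ ppPart β S := by
  intro x hx
  refine mem_ppPart.2 ⟨0, ?_⟩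
  rw [image_pow_zero]
  exact hx


/-! #### A Baire-category covering lemma -/

lemma compact_subset_of_iUnion_closed [LocallyCompactSpace G]
    {K : ℕ → Set G} (hsub : ∀ n, IsSubgroupSet (K n)) (hmono : Monotone K)
    (hcpt : ∀ n, IsCompact (K n)) (hcl : IsClosed (⋃ n, K n))
    {C : Set G} (hC : IsCompact C) (hCsub : C ⊆ ⋃ n, K n) : ∃ N, ∀ c ∈ C, c ∈ K N := by
  classical
  set H : Set G := ⋃ n, K n with hH
  have hHsub : IsSubgroupSet H := by
    constructor
    · exact Set.mem_iUnion.2 ⟨0, (hsub 0).one_mem⟩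
    · intro x y hx hy
      obtain ⟨m, hm⟩ := Set.mem_iUnion.1 hx
      obtain ⟨n, hn⟩ := Set.mem_iUnion.1 hy
      exact Set.mem_iUnion.2 ⟨max m n, (hsub _).mul_mem (hmono (le_max_left m n) hm)
        (hmono (le_max_right m n) hn)⟩
    · intro x hx
      obtain ⟨m, hm⟩ := Set.mem_iUnion.1 hx
      exact Set.mem_iUnion.2 ⟨m, (hsub m).inv_mem hm⟩
  -- a choice of level for each element of `H`
  have em_spec : ∀ c : G, c ∈ H → ∃ n, c ∈ K n := fun c hc => Set.mem_iUnion.1 hc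
  set em : G → ℕ := fun c => if h : c ∈ H then (em_spec c h).choose else 0 with hem
  have hemK : ∀ c : G, c ∈ H → c ∈ K (em c) := by
    intro c hc
    simp only [hem, dif_pos hc]
    exact (em_spec c hc).choose_spec
  -- Baire on the subtype `H`
  haveI : LocallyCompactSpace H := hcl.locallyCompactSpace
  haveI : Nonempty H := ⟨⟨1, hHsub.one_mem⟩⟩
  have hfcl : ∀ n, IsClosed ((Subtype.val ⁻¹' K n : Set H)) :=
    fun n => (hcpt n).isClosed.preimage continuous_subtype_val
  have hfU : ⋃ n, (Subtype.val ⁻¹' K n : Set H) = Set.univ := by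
    ext ⟨z, hz⟩
    simp only [Set.mem_iUnion, Set.mem_preimage, Set.mem_univ, iff_true]
    exact Set.mem_iUnion.1 hz
  obtain ⟨n₀, hn₀⟩ := nonempty_interior_of_iUnion_of_closed hfcl hfU
  obtain ⟨xb, hxb⟩ := hn₀
  obtain ⟨t, ht_sub, ht_open, hxbt⟩ := mem_interior.1 hxb
  obtain ⟨O, hO_open, hO_eq⟩ := isOpen_induced_iff.1 ht_open
  have hxO : (xb : G) ∈ O := by
    rw [← hO_eq] at hxbt
    exact hxbt
  have hOK : ∀ z : G, z ∈ O → z ∈ H → z ∈ K n₀ := by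
    intro z hzO hzH
    have : (⟨z, hzH⟩ : H) ∈ (Subtype.val ⁻¹' O : Set H) := hzO
    rw [hO_eq] at this
    exact ht_sub this
  set x : G := (xb : G) with hx
  have hxH : x ∈ H := xb.2
  have hxK : x ∈ K n₀ := hOK x hxO hxH
  -- cover `C` by translated copies of `O`
  set U : C → Set G := fun c₀ => {z : G | x * (c₀ : G)⁻¹ * z ∈ O} with hU
  have hUopen : ∀ c₀ : C, IsOpen (U c₀) := fun c₀ => hO_open.preimage (continuous_mul_left _)
  have hCU : C ⊆ ⋃ c₀ : C, U c₀ := by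
    intro c hc
    refine Set.mem_iUnion.2 ⟨⟨c, hc⟩, ?_⟩
    simp only [hU, Set.mem_setOf_eq, inv_mul_cancel_right₀]
    rw [inv_mul_cancel_right]
    exact hxO
  obtain ⟨s, hs⟩ := hC.elim_finite_subcover U hUopen hCU
  set N : ℕ := max n₀ (s.sup fun c₀ => em (c₀ : G)) with hN
  refine ⟨N, fun c hc => ?_⟩
  obtain ⟨c₀, hc₀s, hcU⟩ := Set.mem_iUnion₂.1 (hs hc)
  have hc₀H : (c₀ : G) ∈ H := hCsub c₀.2
  have hcH : c ∈ H := hCsub hc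
  have hprod : x * (c₀ : G)⁻¹ * c ∈ H :=
    hHsub.mul_mem (hHsub.mul_mem hxH (hHsub.inv_mem hc₀H)) hcH
  have hprodK : x * (c₀ : G)⁻¹ * c ∈ K n₀ := hOK _ hcU hprod
  have h1 : (c₀ : G) ∈ K N := hmono (le_trans (Finset.le_sup hc₀s) (le_max_right _ _)) (hemK _ hc₀H)
  have h2 : x ∈ K N := hmono (le_max_left _ _) hxK
  have h3 : x * (c₀ : G)⁻¹ * c ∈ K N := hmono (le_max_left _ _) hprodK
  have : (c₀ : G) * x⁻¹ * (x * (c₀ : G)⁻¹ * c) = c := by group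
  rw [← this]
  exact (hsub N).mul_mem ((hsub N).mul_mem h1 ((hsub N).inv_mem h2)) h3

/-- If a point of `posPart β S` has relatively compact forward orbit and `ppPart β S` is
closed, then its whole forward orbit lies in `posPart β S`. -/
lemma forward_orbit_in_posPart [LocallyCompactSpace G] {β : MulAut G}
    (hβ : Continuous ⇑β) (hβ' : Continuous ⇑β⁻¹)
    {S : Set G} (hS : IsSubgroupSet S) (hcpt : IsCompact S)
    (hcl : IsClosed (ppPart β S))
    {a : G} (ha : a ∈ posPart β S)
    (hbd : IsCompact (closure (Set.range fun n : ℕ => (β ^ n) a))) :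
    ∀ n : ℕ, (β ^ n) a ∈ posPart β S := by
  set K : ℕ → Set G := fun n => ⇑(β ^ n) '' posPart β S with hK
  have hKsub : ∀ n, IsSubgroupSet (K n) := fun n => (isSubgroupSet_posPart hS).image_pow n
  have hKmono : Monotone K := fun m n h => image_pow_posPart_mono h
  have hKcpt : ∀ n, IsCompact (K n) :=
    fun n => isCompact_image_pow hβ n (isCompact_posPart hβ' hcpt)
  have hKcl : IsClosed (⋃ n, K n) := hcl
  have hrange : (Set.range fun n : ℕ => (β ^ n) a) ⊆ ⋃ n, K n := by
    rintro _ ⟨n, rfl⟩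
    exact Set.mem_iUnion.2 ⟨n, ⟨a, ha, rfl⟩⟩
  obtain ⟨N, hN⟩ := compact_subset_of_iUnion_closed hKsub hKmono hKcpt hKcl hbd
    (closure_minimal hrange hcl)
  intro n
  have h1 : (β ^ (N + n)) a ∈ K N := hN _ (subset_closure ⟨N + n, rfl⟩)
  have h2 : (β ^ (N + n)) a = (β ^ N) ((β ^ n) a) := by
    rw [pow_add, MulAut.mul_apply]
  rw [h2] at h1
  obtain ⟨y, hy, hyeq⟩ := h1
  have : y = (β ^ n) a := (β ^ N).injective hyeq
  rwa [← this]

/-- Key step for the forward direction: if `W` is tidy for `α` then each element of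
`W ∩ M_α` has its whole `ℤ`-orbit inside `W`. -/
lemma orbit_subset_of_tidy [LocallyCompactSpace G] {α : MulAut G}
    (hc : Continuous ⇑α) (hc' : Continuous ⇑α⁻¹) {W : Subgroup G}
    (hW : IsTidyFor α W) {x : G} (hxW : x ∈ (W : Set G)) (hxM : x ∈ levSet α) :
    ∀ n : ℤ, (α ^ n) x ∈ (W : Set G) := by
  have hcc : Continuous ⇑α⁻¹⁻¹ := by rw [inv_inv]; exact hc
  obtain ⟨hWc, hWo, hT1, hT2p, hT2m⟩ := hW
  have hx' : x ∈ posPart α (W : Set G) * negPart α (W : Set G) := by rw [← hT1]; exact hxW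
  obtain ⟨a, ha, b, hb, hab0⟩ := hx'
  have hab : a * b = x := hab0
  have hb' : b ∈ posPart α⁻¹ (W : Set G) := hb
  have hbW : ∀ n : ℕ, (α ^ n) b ∈ (W : Set G) := by
    intro n
    have := mem_posPart.1 hb' n
    rwa [inv_inv] at this
  have haW : ∀ n : ℕ, (α⁻¹ ^ n) a ∈ (W : Set G) := fun n => mem_posPart.1 ha n
  -- the forward orbit of `a` is relatively compact
  have hbd_a : IsCompact (closure (Set.range fun n : ℕ => (α ^ n) a)) := by
    have hsub : (Set.range fun n : ℕ => (α ^ n) a) ⊆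
        closure (Set.range fun n : ℤ => (α ^ n) x) * (W : Set G) := by
      rintro _ ⟨n, rfl⟩
      dsimp only
      have : (α ^ n) a = (α ^ n) x * ((α ^ n) b)⁻¹ := by
        rw [← hab, map_mul]; group
      rw [this]
      refine Set.mul_mem_mul ?_ (W.inv_mem (hbW n))
      rw [← zpow_natCast_apply]
      exact orbit_mem_closure x n
    have hKc : IsCompact (closure (Set.range fun n : ℤ => (α ^ n) x) * (W : Set G)) :=
      hxM.mul hWc
    exact IsCompact.of_isClosed_subset hKc isClosed_closure (closure_minimal hsub hKc.isClosed)
  have haf : ∀ n : ℕ, (α ^ n) a ∈ posPart α (W : Set G) :=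
    forward_orbit_in_posPart hc hc' (IsSubgroupSet.coe W) hWc hT2p ha hbd_a
  -- `a` and `b` lie in `levSet α`
  have haM : a ∈ levSet α := by
    refine mem_levSet_of_forall hWc fun n => ?_
    rcases le_or_gt 0 n with hn | hn
    · obtain ⟨m, rfl⟩ := Int.eq_ofNat_of_zero_le hn
      rw [zpow_natCast_apply]
      exact posPart_subset (haf m)
    · obtain ⟨m, rfl⟩ : ∃ m : ℕ, n = -(m : ℤ) := ⟨n.natAbs, by omega⟩
      rw [zpow_neg_natCast_apply]
      exact haW m
  have hbM : b ∈ levSet α := by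
    have : b = a⁻¹ * x := by rw [← hab]; group
    rw [this]
    exact (isSubgroupSet_levSet α).mul_mem ((isSubgroupSet_levSet α).inv_mem haM) hxM
  -- the backward orbit of `b` is relatively compact
  have hbd_b : IsCompact (closure (Set.range fun n : ℕ => (α⁻¹ ^ n) b)) := by
    have hsub : (Set.range fun n : ℕ => (α⁻¹ ^ n) b) ⊆
        closure (Set.range fun n : ℤ => (α ^ n) b) := by
      rintro _ ⟨n, rfl⟩
      dsimp only
      rw [← zpow_neg_natCast_apply]
      exact orbit_mem_closure b _
    exact IsCompact.of_isClosed_subset hbM isClosed_closure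
      (closure_minimal hsub isClosed_closure)
  have hbf : ∀ n : ℕ, (α⁻¹ ^ n) b ∈ posPart α⁻¹ (W : Set G) := by
    refine forward_orbit_in_posPart hc' hcc (IsSubgroupSet.coe W) hWc ?_ hb' hbd_b
    rw [← mmPart_eq_ppPart_inv]
    exact hT2m
  -- conclusion
  intro n
  rcases le_or_gt 0 n with hn | hn
  · obtain ⟨m, rfl⟩ := Int.eq_ofNat_of_zero_le hn
    rw [zpow_natCast_apply, ← hab, map_mul]
    exact W.mul_mem (posPart_subset (haf m)) (hbW m)
  · obtain ⟨m, rfl⟩ : ∃ m : ℕ, n = -(m : ℤ) := ⟨n.natAbs, by omega⟩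
    rw [zpow_neg_natCast_apply, ← hab, map_mul]
    exact W.mul_mem (haW m) (posPart_subset (hbf m))


/-! #### `zpow` images -/

lemma zpow_neg_apply_zpow (β : MulAut G) (n : ℤ) (x : G) : (β ^ (-n)) ((β ^ n) x) = x := by
  rw [← MulAut.mul_apply, ← zpow_add, neg_add_cancel, zpow_zero, MulAut.one_apply]

lemma image_zpow_eq_preimage (β : MulAut G) (n : ℤ) (S : Set G) :
    ⇑(β ^ n) '' S = ⇑(β ^ (-n)) ⁻¹' S := by
  refine congrFun (Set.image_eq_preimage_of_inverse (fun x => zpow_neg_apply_zpow β n x)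
    (fun x => ?_)) S
  have := zpow_neg_apply_zpow β (-n) x
  rwa [neg_neg] at this

lemma mem_image_zpow {β : MulAut G} {n : ℤ} {S : Set G} {x : G} :
    x ∈ ⇑(β ^ n) '' S ↔ (β ^ (-n)) x ∈ S := by
  rw [image_zpow_eq_preimage]; rfl

lemma continuous_zpow {β : MulAut G} (hβ : Continuous ⇑β) (hβ' : Continuous ⇑β⁻¹) (n : ℤ) :
    Continuous ⇑(β ^ n) := by
  rcases le_or_gt 0 n with hn | hn
  · obtain ⟨m, rfl⟩ := Int.eq_ofNat_of_zero_le hn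
    have : ⇑(β ^ (m : ℤ)) = ⇑(β ^ m) := funext fun x => zpow_natCast_apply β m x
    rw [this]; exact continuous_pow hβ m
  · obtain ⟨m, rfl⟩ : ∃ m : ℕ, n = -(m : ℤ) := ⟨n.natAbs, by omega⟩
    have : ⇑(β ^ (-(m : ℤ))) = ⇑(β⁻¹ ^ m) := funext fun x => zpow_neg_natCast_apply β m x
    rw [this]; exact continuous_pow hβ' m

lemma image_pow_of_image_eq {β : MulAut G} {S : Set G} (h : ⇑β '' S = S) (n : ℕ) :
    ⇑(β ^ n) '' S = S := by
  induction n with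
  | zero => exact image_pow_zero β S
  | succ n ih =>
      have hcomp : ⇑(β ^ (n + 1)) = ⇑(β ^ n) ∘ ⇑β := by
        funext x; rw [Function.comp_apply, pow_succ, MulAut.mul_apply]
      rw [hcomp, Set.image_comp, h, ih]

lemma image_inv_of_image_eq {β : MulAut G} {S : Set G} (h : ⇑β '' S = S) :
    ⇑β⁻¹ '' S = S := by
  conv_lhs => rw [← h]
  rw [← Set.image_comp]
  have : ⇑β⁻¹ ∘ ⇑β = id := by
    funext x
    have := inv_pow_apply_pow β 1 x
    simpa [pow_one] using this
  rw [this, Set.image_id]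

/-- the forward direction -/
lemma isTidyOn_of_isTidy [LocallyCompactSpace G] {α : MulAut G}
    (hc : Continuous ⇑α) (hc' : Continuous ⇑α⁻¹) (h : IsTidy α) : IsTidyOn α (levSet α) := by
  intro U hU
  obtain ⟨W, hW, hWU⟩ := h U hU
  have hWc : IsCompact (W : Set G) := hW.1
  have hWo : IsOpen (W : Set G) := hW.2.1
  set S : Set G := (W : Set G) ∩ levSet α with hS
  have hSsub : IsSubgroupSet S := (IsSubgroupSet.coe W).inter (isSubgroupSet_levSet α)
  have hfull : ∀ x ∈ S, ∀ n : ℤ, (α ^ n) x ∈ (W : Set G) :=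
    fun x hx => orbit_subset_of_tidy hc hc' hW hx.1 hx.2
  -- `S` is `α`-invariant
  have hmem : ∀ x ∈ S, α x ∈ S ∧ α⁻¹ x ∈ S := by
    intro x hx
    refine ⟨⟨?_, ?_⟩, ⟨?_, ?_⟩⟩
    · have := hfull x hx 1
      rwa [zpow_one] at this
    · have := levSet_pow_mem hx.2 1
      rwa [pow_one] at this
    · have := hfull x hx (-1)
      rwa [zpow_neg, zpow_one, MulAut.inv_def] at this
    · have := levSet_inv_pow_mem hx.2 1
      rwa [pow_one] at this
  have hinv : ⇑α '' S = S := by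
    apply Set.Subset.antisymm
    · rintro _ ⟨x, hx, rfl⟩; exact (hmem x hx).1
    · intro x hx
      refine ⟨α⁻¹ x, (hmem x hx).2, ?_⟩
      rw [MulAut.inv_def, MulEquiv.apply_symm_apply]
  have hinv' : ⇑α⁻¹ '' S = S := image_inv_of_image_eq hinv
  -- `S` agrees with `⋂ n : ℤ, α^n W`, hence is compact
  have hSeq : S = ⋂ n : ℤ, ⇑(α ^ n) '' (W : Set G) := by
    apply Set.Subset.antisymm
    · intro x hx
      refine Set.mem_iInter.2 fun n => mem_image_zpow.2 (hfull x hx (-n))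
    · intro x hx
      have hall : ∀ n : ℤ, (α ^ n) x ∈ (W : Set G) := by
        intro n
        have := mem_image_zpow.1 (Set.mem_iInter.1 hx (-n))
        rwa [neg_neg] at this
      refine ⟨?_, mem_levSet_of_forall hWc hall⟩
      have := hall 0
      rwa [zpow_zero, MulAut.one_apply] at this
  have hScl : IsClosed S := by
    rw [hSeq]
    refine isClosed_iInter fun n => ?_
    rw [image_zpow_eq_preimage]
    exact hWc.isClosed.preimage (continuous_zpow hc hc' (-n))
  have hScpt : IsCompact S :=
    IsCompact.of_isClosed_subset hWc hScl (fun x hx => hx.1)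
  -- parts of `S` are all equal to `S`
  have hpos : posPart α S = S := by
    have : ∀ n : ℕ, ⇑(α ^ n) '' S = S := image_pow_of_image_eq hinv
    calc posPart α S = ⋂ n : ℕ, ⇑(α ^ n) '' S := rfl
    _ = ⋂ _n : ℕ, S := by exact Set.iInter_congr this
    _ = S := Set.iInter_const S
  have hneg : negPart α S = S := by
    have : ∀ n : ℕ, ⇑(α⁻¹ ^ n) '' S = S := image_pow_of_image_eq hinv'
    calc negPart α S = ⋂ n : ℕ, ⇑(α⁻¹ ^ n) '' S := rfl
    _ = ⋂ _n : ℕ, S := by exact Set.iInter_congr this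
    _ = S := Set.iInter_const S
  have hpp : ppPart α S = S := by
    have : ∀ n : ℕ, ⇑(α ^ n) '' posPart α S = S := by
      intro n; rw [hpos]; exact image_pow_of_image_eq hinv n
    calc ppPart α S = ⋃ n : ℕ, ⇑(α ^ n) '' posPart α S := rfl
    _ = ⋃ _n : ℕ, S := by exact Set.iUnion_congr this
    _ = S := Set.iUnion_const S
  have hmm : mmPart α S = S := by
    have : ∀ n : ℕ, ⇑(α⁻¹ ^ n) '' negPart α S = S := by
      intro n; rw [hneg]; exact image_pow_of_image_eq hinv' n
    calc mmPart α S = ⋃ n : ℕ, ⇑(α⁻¹ ^ n) '' negPart α S := rfl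
    _ = ⋃ _n : ℕ, S := by exact Set.iUnion_congr this
    _ = S := Set.iUnion_const S
  -- assemble the subgroup
  obtain ⟨V, hV⟩ := hSsub.toSubgroup
  refine ⟨V, ⟨?_, ?_, ?_, ?_, ?_, ?_⟩, ?_⟩
  · rw [hV]; exact fun x hx => hx.2
  · rw [hV]; exact hScpt
  · have : (Subtype.val ⁻¹' (V : Set G) : Set (levSet α)) =
        (Subtype.val ⁻¹' (W : Set G) : Set (levSet α)) := by
      ext ⟨x, hx⟩
      simp only [Set.mem_preimage, hV]
      exact ⟨fun hxS => hxS.1, fun hxW => ⟨hxW, hx⟩⟩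
    rw [this]
    exact hWo.preimage continuous_subtype_val
  · rw [hV, hpos, hneg, hSsub.mul_self]
  · rw [hV, hpp]
    exact hScl.preimage continuous_subtype_val
  · rw [hV, hmm]
    exact hScl.preimage continuous_subtype_val
  · rw [hV]
    exact fun x hx => hWU hx.1


/-! #### van Dantzig's theorem -/

lemma exists_compactOpen_subgroup [LocallyCompactSpace G] [TotallyDisconnectedSpace G]
    {U : Set G} (hU : U ∈ 𝓝 (1 : G)) :
    ∃ W : Subgroup G, IsCompact (W : Set G) ∧ IsOpen (W : Set G) ∧ (W : Set G) ⊆ U := by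
  obtain ⟨U₀, hU₀U, hU₀o, h1U₀⟩ := mem_nhds_iff.1 hU
  obtain ⟨K, hKc, h1K, hKU₀⟩ := exists_compact_subset hU₀o h1U₀
  obtain ⟨C, hCclopen, h1C, hCsub⟩ :=
    loc_compact_Haus_tot_disc_of_zero_dim.mem_nhds_iff.1 (isOpen_interior.mem_nhds h1K)
  have hCc : IsCompact C :=
    IsCompact.of_isClosed_subset hKc hCclopen.1 (hCsub.trans interior_subset)
  obtain ⟨Ω, hΩnhds, hΩC⟩ := compact_open_separated_mul_left hCc hCclopen.2 subset_rfl
  set Ω' : Set G := Ω ∩ Ω⁻¹ with hΩ'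
  have hΩ'nhds : Ω' ∈ 𝓝 (1 : G) := Filter.inter_mem hΩnhds (inv_mem_nhds_one G hΩnhds)
  have hsmul : ∀ x ∈ Ω, x • C ⊆ C := by
    intro x hx c hcx
    obtain ⟨c0, hc0, rfl⟩ := hcx
    exact hΩC (Set.mul_mem_mul hx hc0)
  have hp : ∀ g ∈ Subgroup.closure Ω', g • C = C := by
    intro g hg
    induction hg using Subgroup.closure_induction with
    | mem x hx =>
        have hx1 : x ∈ Ω := hx.1
        have hx2 : x⁻¹ ∈ Ω := Set.mem_inv.1 hx.2
        refine Set.Subset.antisymm (hsmul x hx1) ?_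
        intro c hc
        have := hsmul x⁻¹ hx2 (Set.smul_mem_smul_set hc : x⁻¹ • c ∈ x⁻¹ • C)
        refine ⟨x⁻¹ • c, this, ?_⟩
        simp [smul_smul]
    | one => simp
    | mul x y hx hy hpx hpy => rw [mul_smul, hpy, hpx]
    | inv x hx hpx =>
        conv_lhs => rw [← hpx]
        rw [inv_smul_smul]
  have hHC : (Subgroup.closure Ω' : Set G) ⊆ C := by
    intro g hg
    have : g ∈ g • C := ⟨1, h1C, mul_one g⟩
    rwa [hp g hg] at this
  have hHopen : IsOpen (Subgroup.closure Ω' : Set G) :=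
    Subgroup.isOpen_of_mem_nhds _ (Filter.mem_of_superset hΩ'nhds Subgroup.subset_closure)
  refine ⟨Subgroup.closure Ω', ?_, hHopen, ?_⟩
  · exact IsCompact.of_isClosed_subset hCc ((Subgroup.closure Ω').isClosed_of_isOpen hHopen) hHC
  · exact hHC.trans ((hCsub.trans interior_subset).trans (hKU₀.trans hU₀U))

/-- Neighbourhood basis of compact open subgroups. -/
lemma exists_compactOpen_subgroup_nhds [LocallyCompactSpace G] [TotallyDisconnectedSpace G]
    {x : G} {U : Set G} (hUo : IsOpen U) (hxU : x ∈ U) :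
    ∃ W : Subgroup G, IsCompact (W : Set G) ∧ IsOpen (W : Set G) ∧
      (fun g => x * g) '' (W : Set G) ⊆ U := by
  have : (fun g => x * g) ⁻¹' U ∈ 𝓝 (1 : G) := by
    refine (hUo.preimage (continuous_mul_left x)).mem_nhds ?_
    simp [hxU]
  obtain ⟨W, h1, h2, h3⟩ := exists_compactOpen_subgroup this
  exact ⟨W, h1, h2, by rwa [Set.image_subset_iff]⟩

/-! #### Relative topology transfer -/

lemma relOpen_iff {M S : Set G} (hS : S ⊆ M) :
    IsOpen ((Subtype.val ⁻¹' S) : Set M) ↔ ∃ O : Set G, IsOpen O ∧ O ∩ M = S := by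
  constructor
  · intro h
    obtain ⟨O, hOo, hOeq⟩ := isOpen_induced_iff.1 h
    refine ⟨O, hOo, ?_⟩
    ext z
    constructor
    · rintro ⟨hzO, hzM⟩
      have : (⟨z, hzM⟩ : M) ∈ (Subtype.val ⁻¹' O : Set M) := hzO
      rw [hOeq] at this
      exact this
    · intro hz
      have hzM : z ∈ M := hS hz
      have : (⟨z, hzM⟩ : M) ∈ (Subtype.val ⁻¹' S : Set M) := hz
      rw [← hOeq] at this
      exact ⟨this, hzM⟩
  · rintro ⟨O, hOo, rfl⟩
    have : (Subtype.val ⁻¹' (O ∩ M) : Set M) = Subtype.val ⁻¹' O := by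
      ext ⟨z, hz⟩
      simp [hz]
    rw [this]
    exact hOo.preimage continuous_subtype_val

lemma isClosed_of_relClosed {M S : Set G} (hS : S ⊆ M) (hM : IsClosed M)
    (h : IsClosed ((Subtype.val ⁻¹' S) : Set M)) : IsClosed S := by
  obtain ⟨F, hFc, hFeq⟩ := isClosed_induced_iff.1 h
  have : S = F ∩ M := by
    ext z
    constructor
    · intro hz
      have hzM : z ∈ M := hS hz
      have : (⟨z, hzM⟩ : M) ∈ (Subtype.val ⁻¹' S : Set M) := hz
      rw [← hFeq] at this
      exact ⟨this, hzM⟩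
    · rintro ⟨hzF, hzM⟩
      have : (⟨z, hzM⟩ : M) ∈ (Subtype.val ⁻¹' F : Set M) := hzF
      rw [hFeq] at this
      exact this
  rw [this]
  exact hFc.inter hM

/-! #### Closedness of `M_α` -/

lemma isClosed_levSet_of_rel_open {α : MulAut G} {V : Subgroup G}
    (hVM : (V : Set G) ⊆ levSet α) (hVc : IsCompact (V : Set G))
    {O : Set G} (hOo : IsOpen O) (hOM : O ∩ levSet α = (V : Set G)) :
    IsClosed (levSet α) := by
  refine isClosed_of_closure_subset ?_
  intro x hx
  have h1O : (1 : G) ∈ O := by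
    have : (1 : G) ∈ O ∩ levSet α := hOM.symm ▸ V.one_mem
    exact this.1
  obtain ⟨Ω, hΩo, h1Ω, hΩmul⟩ := exists_open_nhds_one_mul_subset (hOo.mem_nhds h1O)
  set Ω' : Set G := Ω ∩ Ω⁻¹ with hΩ'def
  have hΩ'o : IsOpen Ω' := hΩo.inter hΩo.inv
  have h1Ω' : (1 : G) ∈ Ω' := ⟨h1Ω, by simpa using h1Ω⟩
  have hΩ'sym : ∀ w ∈ Ω', w⁻¹ ∈ Ω' := by
    rintro w ⟨hw1, hw2⟩
    exact ⟨Set.mem_inv.1 hw2, by simpa using hw1⟩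
  have hxΩo : IsOpen (x • Ω') := hΩ'o.smul x
  have hxxΩ : x ∈ x • Ω' := ⟨1, h1Ω', mul_one x⟩
  obtain ⟨m, hm⟩ := mem_closure_iff.1 hx (x • Ω') hxΩo hxxΩ
  obtain ⟨hmΩ, hmM⟩ := hm
  have hclaim : levSet α ∩ (x • Ω') ⊆ m • (V : Set G) := by
    rintro m' ⟨hm'M, hm'Ω⟩
    obtain ⟨ω₁, hω₁, hmeq⟩ := hmΩ
    obtain ⟨ω₂, hω₂, hm'eq⟩ := hm'Ω
    have hmul : m⁻¹ * m' = ω₁⁻¹ * ω₂ := by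
      rw [← hmeq, ← hm'eq]; simp only [smul_eq_mul]; group
    have hO' : m⁻¹ * m' ∈ O := by
      rw [hmul]
      exact hΩmul (Set.mul_mem_mul (hΩ'sym ω₁ hω₁).1 hω₂.1)
    have hM' : m⁻¹ * m' ∈ levSet α :=
      (isSubgroupSet_levSet α).mul_mem ((isSubgroupSet_levSet α).inv_mem hmM) hm'M
    have : m⁻¹ * m' ∈ (V : Set G) := hOM ▸ ⟨hO', hM'⟩
    exact ⟨m⁻¹ * m', this, by simp only [smul_eq_mul]; group⟩
  have hxcl : x ∈ closure (levSet α ∩ (x • Ω')) := by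
    rw [mem_closure_iff]
    intro o ho hxo
    obtain ⟨y, hy⟩ := mem_closure_iff.1 hx (o ∩ (x • Ω')) (ho.inter hxΩo) ⟨hxo, hxxΩ⟩
    exact ⟨y, hy.1.1, hy.2, hy.1.2⟩
  have hmVc : IsCompact (m • (V : Set G)) := by
    rw [← Set.image_smul]
    exact hVc.image (continuous_const_smul m)
  have : x ∈ m • (V : Set G) :=
    (closure_minimal hclaim hmVc.isClosed) hxcl
  obtain ⟨v, hv, rfl⟩ := this
  exact (isSubgroupSet_levSet α).mul_mem hmM (hVM hv)

/-! #### Invariance of tidy-in-`M` subgroups -/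

lemma posPart_invariant_aux [LocallyCompactSpace G] {β : MulAut G}
    (hβ : Continuous ⇑β) (hβ' : Continuous ⇑β⁻¹) {S : Set G}
    (hSsub : IsSubgroupSet S) (hScpt : IsCompact S) (hSM : S ⊆ levSet β)
    (hppcl : IsClosed (ppPart β S)) : ⇑β '' posPart β S = posPart β S := by
  refine Set.Subset.antisymm ?_ posPart_subset_image
  rintro _ ⟨a, ha, rfl⟩
  have haM : a ∈ levSet β := hSM (posPart_subset ha)
  have hbd : IsCompact (closure (Set.range fun n : ℕ => (β ^ n) a)) := by
    have hsub : (Set.range fun n : ℕ => (β ^ n) a) ⊆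
        closure (Set.range fun n : ℤ => (β ^ n) a) := by
      rintro _ ⟨n, rfl⟩
      dsimp only
      rw [← zpow_natCast_apply]
      exact orbit_mem_closure a _
    exact IsCompact.of_isClosed_subset haM isClosed_closure
      (closure_minimal hsub isClosed_closure)
  have := forward_orbit_in_posPart hβ hβ' hSsub hScpt hppcl ha hbd 1
  rwa [pow_one] at this

lemma image_eq_of_isTidyForIn [LocallyCompactSpace G] {α : MulAut G}
    (hc : Continuous ⇑α) (hc' : Continuous ⇑α⁻¹) {V : Subgroup G}
    (hV : IsTidyForIn α (levSet α) V) : ⇑α '' (V : Set G) = (V : Set G) := by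
  have hcc : Continuous ⇑α⁻¹⁻¹ := by rw [inv_inv]; exact hc
  obtain ⟨hVM, hVc, hVo, hVT1, hVpp, hVmm⟩ := hV
  obtain ⟨O, hOo, hOM⟩ := (relOpen_iff hVM).1 hVo
  have hMcl : IsClosed (levSet α) := isClosed_levSet_of_rel_open hVM hVc hOo hOM
  -- `ppPart` and `mmPart` are closed in `G`
  have hppM : ppPart α (V : Set G) ⊆ levSet α := by
    intro x hx
    obtain ⟨n, y, hy, rfl⟩ := mem_ppPart.1 hx
    exact levSet_pow_mem (hVM (posPart_subset hy)) n
  have hmmM : mmPart α (V : Set G) ⊆ levSet α := by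
    intro x hx
    have hx' : x ∈ ppPart α⁻¹ (V : Set G) := by
      rw [← mmPart_eq_ppPart_inv]; exact hx
    obtain ⟨n, y, hy, rfl⟩ := mem_ppPart.1 hx'
    exact levSet_inv_pow_mem (hVM (posPart_subset hy)) n
  have hppcl : IsClosed (ppPart α (V : Set G)) := isClosed_of_relClosed hppM hMcl hVpp
  have hmmcl : IsClosed (mmPart α (V : Set G)) := isClosed_of_relClosed hmmM hMcl hVmm
  -- invariance of the parts
  have hA : ⇑α '' posPart α (V : Set G) = posPart α (V : Set G) :=
    posPart_invariant_aux hc hc' (IsSubgroupSet.coe V) hVc hVM hppcl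
  have hB : ⇑α⁻¹ '' posPart α⁻¹ (V : Set G) = posPart α⁻¹ (V : Set G) := by
    refine posPart_invariant_aux hc' hcc (IsSubgroupSet.coe V) hVc ?_ ?_
    · rw [levSet_inv]; exact hVM
    · rw [← mmPart_eq_ppPart_inv]; exact hmmcl
  have hcompinv : ⇑α ∘ ⇑α⁻¹ = id := by
    funext x
    have := pow_apply_inv_pow α 1 x
    simpa [pow_one] using this
  have hBneg : ⇑α '' negPart α (V : Set G) = negPart α (V : Set G) := by
    rw [negPart_eq_posPart_inv]
    conv_lhs => rw [← hB]
    rw [← Set.image_comp, hcompinv, Set.image_id]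
  calc ⇑α '' (V : Set G) = ⇑α '' (posPart α (V : Set G) * negPart α (V : Set G)) := by rw [← hVT1]
  _ = (⇑α '' posPart α (V : Set G)) * (⇑α '' negPart α (V : Set G)) :=
      Set.image_mul α.toMonoidHom
  _ = (V : Set G) := by rw [hA, hBneg, ← hVT1]

/-! #### A conjugation-invariant compact open subgroup -/

lemma exists_conj_invariant_subgroup {V W : Subgroup G}
    (hVc : IsCompact (V : Set G)) (hWo : IsOpen (W : Set G)) (hWc : IsCompact (W : Set G)) :
    ∃ W₁ : Subgroup G, (W₁ : Set G) ⊆ (W : Set G) ∧ IsOpen (W₁ : Set G) ∧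
      IsCompact (W₁ : Set G) ∧ ∀ v ∈ (V : Set G), ∀ x ∈ (W₁ : Set G),
        v * x * v⁻¹ ∈ (W₁ : Set G) := by
  classical
  set S : Set G := {g | ∀ v ∈ (V : Set G), v⁻¹ * g * v ∈ (W : Set G)} with hSdef
  have hSsub : S ⊆ (W : Set G) := by
    intro g hg
    have := hg 1 V.one_mem
    simpa using this
  have hSgrp : IsSubgroupSet S := by
    constructor
    · intro v hv; simpa using W.one_mem
    · intro x y hx hy v hv
      have : v⁻¹ * (x * y) * v = (v⁻¹ * x * v) * (v⁻¹ * y * v) := by group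
      rw [this]
      exact W.mul_mem (hx v hv) (hy v hv)
    · intro x hx v hv
      have : v⁻¹ * x⁻¹ * v = (v⁻¹ * x * v)⁻¹ := by group
      rw [this]
      exact W.inv_mem (hx v hv)
  have hSconj : ∀ v ∈ (V : Set G), ∀ x ∈ S, v * x * v⁻¹ ∈ S := by
    intro v hv x hx u hu
    have huv : v⁻¹ * u ∈ (V : Set G) := V.mul_mem (V.inv_mem hv) hu
    have := hx (v⁻¹ * u) huv
    have heq : (v⁻¹ * u)⁻¹ * x * (v⁻¹ * u) = u⁻¹ * (v * x * v⁻¹) * u := by group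
    rwa [heq] at this
  -- `S` contains an open neighbourhood of `1`
  have hexΩ : ∃ Ω : Set G, IsOpen Ω ∧ (1 : G) ∈ Ω ∧ Ω ⊆ S := by
    set f : G × G → G := fun p => p.1⁻¹ * p.2 * p.1 with hf
    have hfc : Continuous f := by fun_prop
    have hpre : IsOpen (f ⁻¹' (W : Set G)) := hWo.preimage hfc
    have hmem : ∀ v ∈ (V : Set G), (v, (1 : G)) ∈ f ⁻¹' (W : Set G) := by
      intro v hv
      simp only [Set.mem_preimage, hf]
      simpa using W.one_mem
    -- tube lemma by hand
    have hcov : ∀ v : (V : Set G), ∃ A B : Set G, IsOpen A ∧ IsOpen B ∧ (v : G) ∈ A ∧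
        (1 : G) ∈ B ∧ A ×ˢ B ⊆ f ⁻¹' (W : Set G) := by
      intro v
      obtain ⟨A, B, hA, hB, hvA, h1B, hsub⟩ :=
        isOpen_prod_iff.1 hpre (v : G) 1 (hmem v v.2)
      exact ⟨A, B, hA, hB, hvA, h1B, hsub⟩
    choose A B hAo hBo hvA h1B hABsub using hcov
    have hVcov : (V : Set G) ⊆ ⋃ v : (V : Set G), A v := by
      intro v hv
      exact Set.mem_iUnion.2 ⟨⟨v, hv⟩, hvA ⟨v, hv⟩⟩
    obtain ⟨t, ht⟩ := hVc.elim_finite_subcover A hAo hVcov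
    by_cases htne : t.Nonempty
    · refine ⟨⋂ v ∈ t, B v, isOpen_biInter_finset fun v _ => hBo v, ?_, ?_⟩
      · exact Set.mem_iInter₂.2 fun v _ => h1B v
      · intro g hg v hv
        obtain ⟨v₀, hv₀t, hvA₀⟩ := Set.mem_iUnion₂.1 (ht hv)
        exact hABsub v₀ (Set.mk_mem_prod hvA₀ (Set.mem_iInter₂.1 hg v₀ hv₀t))
    · refine ⟨Set.univ, isOpen_univ, Set.mem_univ 1, ?_⟩
      intro g _ v hv
      obtain ⟨v₀, hv₀t, _⟩ := Set.mem_iUnion₂.1 (ht hv)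
      exact absurd hv₀t (by simp [Finset.not_nonempty_iff_eq_empty.1 htne])
  obtain ⟨Ω, hΩo, h1Ω, hΩS⟩ := hexΩ
  obtain ⟨W₁, hW₁⟩ := hSgrp.toSubgroup
  have hW₁o : IsOpen (W₁ : Set G) :=
    Subgroup.isOpen_of_mem_nhds _ (Filter.mem_of_superset (hΩo.mem_nhds h1Ω) (hW₁ ▸ hΩS))
  have hScl : IsClosed S := by
    have : S = ⋂ v : (V : Set G), (fun g => (v : G)⁻¹ * g * (v : G)) ⁻¹' (W : Set G) := by
      ext g
      simp only [Set.mem_iInter, Set.mem_preimage, hSdef, Set.mem_setOf_eq]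
      exact ⟨fun h v => h v v.2, fun h v hv => h ⟨v, hv⟩⟩
    rw [this]
    exact isClosed_iInter fun v => (hWc.isClosed).preimage (by fun_prop)
  refine ⟨W₁, hW₁ ▸ hSsub, hW₁o, ?_, ?_⟩
  · rw [hW₁]
    exact IsCompact.of_isClosed_subset hWc hScl hSsub
  · rw [hW₁]
    exact hSconj


/-! #### Coset counting -/

/-- The left cosets of `B` represented by elements of `A`. -/
def cosets (B A : Set G) : Set (Set G) := {T | ∃ a ∈ A, T = a • B}

/-- Number of left cosets of `B` meeting `A` (junk value `0` if infinite). -/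
noncomputable def cIdx (B A : Set G) : ℕ := (cosets B A).ncard

lemma smul_eq_of_mem {B : Set G} (hB : IsSubgroupSet B) {b : G} (hb : b ∈ B) :
    b • B = B := by
  apply Set.Subset.antisymm
  · rintro _ ⟨c, hc, rfl⟩
    exact hB.mul_mem hb hc
  · intro x hx
    exact ⟨b⁻¹ * x, hB.mul_mem (hB.inv_mem hb) hx, by simp only [smul_eq_mul]; group⟩

lemma smul_coset_eq_iff {B : Set G} (hB : IsSubgroupSet B) {a a' : G} :
    a • B = a' • B ↔ a⁻¹ * a' ∈ B := by
  constructor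
  · intro h
    have : a' ∈ a' • B := ⟨1, hB.one_mem, mul_one a'⟩
    rw [← h] at this
    obtain ⟨b, hb, hab⟩ := this
    have : a⁻¹ * a' = b := by rw [← hab]; simp only [smul_eq_mul]; group
    rwa [this]
  · intro h
    have : a' • B = a • ((a⁻¹ * a') • B) := by
      rw [smul_smul]; congr 1; group
    rw [this, smul_eq_of_mem hB h]

lemma cosets_finite {B A : Set G} (hB : IsSubgroupSet B) (hBo : IsOpen B)
    (hA : IsCompact A) : (cosets B A).Finite := by
  classical
  have hcov : A ⊆ ⋃ a : A, (a : G) • B := by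
    intro a ha
    exact Set.mem_iUnion.2 ⟨⟨a, ha⟩, ⟨1, hB.one_mem, mul_one a⟩⟩
  obtain ⟨F, hF⟩ := hA.elim_finite_subcover (fun a : A => (a : G) • B)
    (fun a => hBo.smul _) hcov
  refine Set.Finite.subset (F.finite_toSet.image fun a : A => (a : G) • B) ?_
  rintro _ ⟨a, ha, rfl⟩
  obtain ⟨f, hfF, hfmem⟩ := Set.mem_iUnion₂.1 (hF ha)
  obtain ⟨b, hb, hfb⟩ := hfmem
  refine ⟨f, hfF, ?_⟩
  rw [smul_coset_eq_iff hB]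
  have : (f : G)⁻¹ * a = b := by rw [← hfb]; simp only [smul_eq_mul]; group
  rwa [this]

/-- The canonical "union of translates" map sending `a • (B ∩ X)` to `a • B`. -/
lemma psi_coset {B X : Set G} (hB : IsSubgroupSet B) (hX : IsSubgroupSet X) (a : G) :
    (⋃ t ∈ a • (B ∩ X), t • B) = a • B := by
  apply Set.Subset.antisymm
  · intro x hx
    obtain ⟨t, ht, hxt⟩ := Set.mem_iUnion₂.1 hx
    obtain ⟨b, hb, rfl⟩ := ht
    obtain ⟨c, hc, rfl⟩ := hxt
    refine ⟨b * c, hB.mul_mem hb.1 hc, ?_⟩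
    simp only [smul_eq_mul]; group
  · intro x hx
    refine Set.mem_iUnion₂.2 ⟨a, ⟨1, ⟨hB.one_mem, hX.one_mem⟩, mul_one a⟩, hx⟩

lemma cIdx_le_inter {B A X : Set G} (hB : IsSubgroupSet B) (hX : IsSubgroupSet X)
    (hfin : (cosets B A).Finite) :
    cIdx (B ∩ X) (A ∩ X) ≤ cIdx B A := by
  classical
  set Ψ : Set G → Set G := fun T => ⋃ t ∈ T, t • B with hΨ
  have hΨval : ∀ a : G, Ψ (a • (B ∩ X)) = a • B := fun a => psi_coset hB hX a
  have hinj : Set.InjOn Ψ (cosets (B ∩ X) (A ∩ X)) := by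
    rintro T ⟨a, ha, rfl⟩ T' ⟨a', ha', rfl⟩ hTT'
    rw [hΨval, hΨval] at hTT'
    rw [smul_coset_eq_iff (hB.inter hX)]
    have hab : a⁻¹ * a' ∈ B := (smul_coset_eq_iff hB).1 hTT'
    exact ⟨hab, hX.mul_mem (hX.inv_mem ha.2) ha'.2⟩
  have hsub : Ψ '' cosets (B ∩ X) (A ∩ X) ⊆ cosets B A := by
    rintro _ ⟨T, ⟨a, ha, rfl⟩, rfl⟩
    exact ⟨a, ha.1, hΨval a⟩
  calc cIdx (B ∩ X) (A ∩ X) = (Ψ '' cosets (B ∩ X) (A ∩ X)).ncard :=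
        (Set.ncard_image_of_injOn hinj).symm
  _ ≤ cIdx B A := Set.ncard_le_ncard hsub hfin

lemma cover_of_cIdx_eq {B A X : Set G} (hB : IsSubgroupSet B) (hX : IsSubgroupSet X)
    (hfin : (cosets B A).Finite) (heq : cIdx (B ∩ X) (A ∩ X) = cIdx B A) :
    A ⊆ (A ∩ X) * B := by
  classical
  set Ψ : Set G → Set G := fun T => ⋃ t ∈ T, t • B with hΨ
  have hΨval : ∀ a : G, Ψ (a • (B ∩ X)) = a • B := fun a => psi_coset hB hX a
  have hinj : Set.InjOn Ψ (cosets (B ∩ X) (A ∩ X)) := by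
    rintro T ⟨a, ha, rfl⟩ T' ⟨a', ha', rfl⟩ hTT'
    rw [hΨval, hΨval] at hTT'
    rw [smul_coset_eq_iff (hB.inter hX)]
    have hab : a⁻¹ * a' ∈ B := (smul_coset_eq_iff hB).1 hTT'
    exact ⟨hab, hX.mul_mem (hX.inv_mem ha.2) ha'.2⟩
  have hsub : Ψ '' cosets (B ∩ X) (A ∩ X) ⊆ cosets B A := by
    rintro _ ⟨T, ⟨a, ha, rfl⟩, rfl⟩
    exact ⟨a, ha.1, hΨval a⟩
  have himeq : Ψ '' cosets (B ∩ X) (A ∩ X) = cosets B A := by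
    refine Set.eq_of_subset_of_ncard_le hsub ?_ hfin
    rw [Set.ncard_image_of_injOn hinj]
    exact heq.ge
  intro a ha
  have : a • B ∈ cosets B A := ⟨a, ha, rfl⟩
  rw [← himeq] at this
  obtain ⟨T, ⟨a', ha', rfl⟩, hT⟩ := this
  rw [hΨval] at hT
  have : a ∈ a' • B := by
    rw [hT]
    exact ⟨1, hB.one_mem, mul_one a⟩
  obtain ⟨b, hb, rfl⟩ := this
  exact Set.mul_mem_mul ha' hb

lemma image_smul_set (β : MulAut G) (a : G) (B : Set G) :
    ⇑β '' (a • B) = (β a) • (⇑β '' B) := by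
  apply Set.Subset.antisymm
  · rintro _ ⟨_, ⟨b, hb, rfl⟩, rfl⟩
    exact ⟨β b, ⟨b, hb, rfl⟩, by simp only [smul_eq_mul]; rw [← map_mul]⟩
  · rintro _ ⟨_, ⟨b, hb, rfl⟩, rfl⟩
    exact ⟨a * b, ⟨b, hb, rfl⟩, by simp only [smul_eq_mul]; rw [map_mul]⟩

lemma cIdx_image (β : MulAut G) (B A : Set G) :
    cIdx (⇑β '' B) (⇑β '' A) = cIdx B A := by
  have hco : cosets (⇑β '' B) (⇑β '' A) = (Set.image ⇑β) '' cosets B A := by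
    apply Set.Subset.antisymm
    · rintro _ ⟨_, ⟨a, ha, rfl⟩, rfl⟩
      exact ⟨a • B, ⟨a, ha, rfl⟩, image_smul_set β a B⟩
    · rintro _ ⟨_, ⟨a, ha, rfl⟩, rfl⟩
      exact ⟨β a, ⟨a, ha, rfl⟩, image_smul_set β a B⟩
  rw [show cIdx (⇑β '' B) (⇑β '' A) = (cosets (⇑β '' B) (⇑β '' A)).ncard from rfl, hco,
    Set.ncard_image_of_injOn (Set.image_injective.2 β.injective).injOn]
  rfl


/-! #### Exchange of intersections and products of compacta -/

lemma mem_image_one {β : MulAut G} {S : Set G} {x : G} : x ∈ ⇑β '' S ↔ β⁻¹ x ∈ S := by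
  have := mem_image_pow (β := β) (n := 1) (S := S) (x := x)
  rwa [pow_one, pow_one] at this

lemma image_inv_pow_image_pow (β : MulAut G) (j : ℕ) (S : Set G) :
    ⇑(β⁻¹ ^ j) '' (⇑(β ^ j) '' S) = S := by
  rw [← Set.image_comp]
  have : ⇑(β⁻¹ ^ j) ∘ ⇑(β ^ j) = id := funext fun x => inv_pow_apply_pow β j x
  rw [this, Set.image_id]

lemma pow_succ_apply (β : MulAut G) (n : ℕ) (x : G) : (β ^ (n + 1)) x = (β ^ n) (β x) := by
  rw [pow_succ, MulAut.mul_apply]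

lemma pow_succ_apply' (β : MulAut G) (n : ℕ) (x : G) : (β ^ (n + 1)) x = β ((β ^ n) x) := by
  rw [pow_succ', MulAut.mul_apply]

lemma image_pow_succ (β : MulAut G) (n : ℕ) (S : Set G) :
    ⇑(β ^ (n + 1)) '' S = ⇑β '' (⇑(β ^ n) '' S) := by
  have h : ⇑(β ^ (n + 1)) = ⇑β ∘ ⇑(β ^ n) := funext fun x => pow_succ_apply' β n x
  rw [h, Set.image_comp]

lemma iInter_mul_compact {B : Set G} (hBc : IsCompact B) {C : ℕ → Set G}
    (hCc : ∀ k, IsCompact (C k)) (hCanti : ∀ {k l : ℕ}, k ≤ l → C l ⊆ C k) :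
    ⋂ k, (B * C k) = B * ⋂ k, C k := by
  apply Set.Subset.antisymm
  · intro x hx
    set F : ℕ → Set (G × G) :=
      fun k => (B ×ˢ C k) ∩ {p : G × G | p.1 * p.2 = x} with hF
    have hFne : ∀ k, (F k).Nonempty := by
      intro k
      obtain ⟨b, hb, c, hc, hbc⟩ := Set.mem_iInter.1 hx k
      exact ⟨(b, c), ⟨⟨hb, hc⟩, hbc⟩⟩
    have hFcl : ∀ k, IsClosed (F k) := by
      intro k
      exact ((hBc.isClosed.prod (hCc k).isClosed)).inter
        (isClosed_eq (continuous_fst.mul continuous_snd) continuous_const)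
    have hFc : ∀ k, IsCompact (F k) := by
      intro k
      exact IsCompact.of_isClosed_subset (hBc.prod (hCc k)) (hFcl k)
        fun p hp => hp.1
    have hFanti : ∀ {k l : ℕ}, k ≤ l → F l ⊆ F k := by
      intro k l hkl p hp
      exact ⟨⟨hp.1.1, hCanti hkl hp.1.2⟩, hp.2⟩
    have hdir : Directed (· ⊇ ·) F := by
      intro k l
      exact ⟨max k l, hFanti (le_max_left k l), hFanti (le_max_right k l)⟩
    obtain ⟨p, hp⟩ := IsCompact.nonempty_iInter_of_directed_nonempty_isCompact_isClosed
      F hdir hFne hFc hFcl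
    have hp0 := Set.mem_iInter.1 hp 0
    refine ⟨p.1, hp0.1.1, p.2, Set.mem_iInter.2 fun k => (Set.mem_iInter.1 hp k).1.2, hp0.2⟩
  · rintro _ ⟨b, hb, c, hc, rfl⟩
    exact Set.mem_iInter.2 fun k => Set.mul_mem_mul hb (Set.mem_iInter.1 hc k)

lemma compact_mul_iInter {B : Set G} (hBc : IsCompact B) {C : ℕ → Set G}
    (hCc : ∀ k, IsCompact (C k)) (hCanti : ∀ {k l : ℕ}, k ≤ l → C l ⊆ C k) :
    ⋂ k, (C k * B) = (⋂ k, C k) * B := by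
  apply Set.Subset.antisymm
  · intro x hx
    set F : ℕ → Set (G × G) :=
      fun k => (C k ×ˢ B) ∩ {p : G × G | p.1 * p.2 = x} with hF
    have hFne : ∀ k, (F k).Nonempty := by
      intro k
      obtain ⟨c, hc, b, hb, hbc⟩ := Set.mem_iInter.1 hx k
      exact ⟨(c, b), ⟨⟨hc, hb⟩, hbc⟩⟩
    have hFcl : ∀ k, IsClosed (F k) := by
      intro k
      exact (((hCc k).isClosed.prod hBc.isClosed)).inter
        (isClosed_eq (continuous_fst.mul continuous_snd) continuous_const)
    have hFc : ∀ k, IsCompact (F k) := by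
      intro k
      exact IsCompact.of_isClosed_subset ((hCc 0).prod hBc) (hFcl k)
        fun p hp => ⟨hCanti (Nat.zero_le k) hp.1.1, hp.1.2⟩
    have hFanti : ∀ {k l : ℕ}, k ≤ l → F l ⊆ F k := by
      intro k l hkl p hp
      exact ⟨⟨hCanti hkl hp.1.1, hp.1.2⟩, hp.2⟩
    have hdir : Directed (· ⊇ ·) F := by
      intro k l
      exact ⟨max k l, hFanti (le_max_left k l), hFanti (le_max_right k l)⟩
    obtain ⟨p, hp⟩ := IsCompact.nonempty_iInter_of_directed_nonempty_isCompact_isClosed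
      F hdir hFne hFc hFcl
    have hp0 := Set.mem_iInter.1 hp 0
    refine ⟨p.1, Set.mem_iInter.2 fun k => (Set.mem_iInter.1 hp k).1.1, p.2, hp0.1.2, hp0.2⟩
  · rintro _ ⟨c, hc, b, hb, rfl⟩
    exact Set.mem_iInter.2 fun k => Set.mul_mem_mul (Set.mem_iInter.1 hc k) hb

lemma mul_subset_of_subsets {A B S : Set G} (hS : IsSubgroupSet S) (hA : A ⊆ S) (hB : B ⊆ S) :
    A * B ⊆ S := by
  rintro _ ⟨a, ha, b, hb, rfl⟩
  exact hS.mul_mem (hA ha) (hB hb)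

lemma inv_set_eq {S : Set G} (hS : IsSubgroupSet S) : S⁻¹ = S := by
  ext x
  simp only [Set.mem_inv]
  exact ⟨fun h => by simpa using hS.inv_mem h, fun h => hS.inv_mem h⟩


lemma mem_negPart {α : MulAut G} {S : Set G} {x : G} :
    x ∈ negPart α S ↔ ∀ n : ℕ, (α ^ n) x ∈ S := by
  rw [negPart_eq_posPart_inv, mem_posPart]
  simp [inv_inv]

lemma IsSubgroupSet.image {β : MulAut G} {S : Set G} (hS : IsSubgroupSet S) :
    IsSubgroupSet (⇑β '' S) := by
  have := hS.image_pow (β := β) 1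
  rwa [pow_one] at this

lemma image_pow_succ' (β : MulAut G) (n : ℕ) (S : Set G) :
    ⇑(β ^ (n + 1)) '' S = ⇑(β ^ n) '' (⇑β '' S) := by
  have h : ⇑(β ^ (n + 1)) = ⇑(β ^ n) ∘ ⇑β := funext fun x => pow_succ_apply β n x
  rw [h, Set.image_comp]

lemma image_mul_set (β : MulAut G) (S T : Set G) :
    ⇑β '' (S * T) = (⇑β '' S) * (⇑β '' T) := by
  have h := Set.image_mul (β.toMonoidHom) (s := S) (t := T)
  simpa using h

/-- Step 1 of the tidying procedure: some finite intersection `Q = ⋂_{j ≤ N} α^j(P)`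
satisfies `Q = Q₋ Q₊`, with `Q₊ = P₊`. -/
lemma exists_T1_subgroup [LocallyCompactSpace G] {α : MulAut G}
    (hc : Continuous ⇑α) (hc' : Continuous ⇑α⁻¹)
    {P : Set G} (hP : IsSubgroupSet P) (hPc : IsCompact P) (hPo : IsOpen P) :
    ∃ Q : Set G, IsSubgroupSet Q ∧ IsCompact Q ∧ IsOpen Q ∧ Q ⊆ P ∧
      posPart α Q = posPart α P ∧ Q = negPart α Q * posPart α Q := by
  classical
  set J : ℕ → Set G := fun j => ⇑(α ^ j) '' P with hJdef
  set Pn : ℕ → Set G := fun n => ⋂ j ∈ Finset.range (n + 1), J j with hPndef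
  have mem_Pn : ∀ {x : G} {n : ℕ}, x ∈ Pn n ↔ ∀ j ≤ n, x ∈ J j := by
    intro x n
    simp only [hPndef, Set.mem_iInter, Finset.mem_range, Nat.lt_succ_iff]
  have memQp : ∀ {x : G}, x ∈ posPart α P ↔ ∀ j : ℕ, x ∈ J j := fun {x} => Set.mem_iInter
  have hJgrp : ∀ j, IsSubgroupSet (J j) := fun j => hP.image_pow j
  have hJ0 : J 0 = P := image_pow_zero α P
  have hJcl : ∀ j, IsClosed (J j) := fun j => isClosed_image_pow hc' j hPc.isClosed
  have hJo : ∀ j, IsOpen (J j) := fun j => isOpen_image_pow hc' j hPo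
  have hgrp : ∀ n, IsSubgroupSet (Pn n) := by
    intro n
    constructor
    · exact mem_Pn.2 fun j _ => (hJgrp j).one_mem
    · intro x y hx hy
      exact mem_Pn.2 fun j hj => (hJgrp j).mul_mem (mem_Pn.1 hx j hj) (mem_Pn.1 hy j hj)
    · intro x hx
      exact mem_Pn.2 fun j hj => (hJgrp j).inv_mem (mem_Pn.1 hx j hj)
  have hanti : ∀ {m n : ℕ}, m ≤ n → Pn n ⊆ Pn m := by
    intro m n hmn x hx
    exact mem_Pn.2 fun j hj => mem_Pn.1 hx j (hj.trans hmn)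
  have hPn0 : Pn 0 = P := by
    apply Set.Subset.antisymm
    · intro x hx
      have := mem_Pn.1 hx 0 le_rfl
      rwa [hJ0] at this
    · intro x hx
      refine mem_Pn.2 fun j hj => ?_
      rw [Nat.le_zero.1 hj, hJ0]
      exact hx
  have hPsub : ∀ n, Pn n ⊆ P := by
    intro n x hx
    have := hanti (Nat.zero_le n) hx
    rwa [hPn0] at this
  have hJsucc : ∀ (j : ℕ) (x : G), x ∈ J (j + 1) ↔ α⁻¹ x ∈ J j := by
    intro j x
    rw [show (x ∈ J (j + 1)) ↔ ((α⁻¹ ^ (j + 1)) x ∈ P) from mem_image_pow,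
      show (α⁻¹ x ∈ J j) ↔ ((α⁻¹ ^ j) (α⁻¹ x) ∈ P) from mem_image_pow,
      pow_succ_apply]
  have hainv : ∀ y : G, α⁻¹ (α y) = y := by
    intro y
    have := inv_pow_apply_pow α 1 y
    rwa [pow_one, pow_one] at this
  have hPnSucc : ∀ n, Pn (n + 1) = P ∩ ⇑α '' Pn n := by
    intro n
    ext x
    rw [Set.mem_inter_iff, mem_image_one, mem_Pn, mem_Pn]
    constructor
    · intro h
      refine ⟨by have := h 0 (Nat.zero_le _); rwa [hJ0] at this, fun j hj => ?_⟩
      exact (hJsucc j x).1 (h (j + 1) (by omega))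
    · rintro ⟨h0, h1⟩ j hj
      rcases Nat.eq_zero_or_pos j with rfl | hjpos
      · rwa [hJ0]
      · obtain ⟨j', rfl⟩ : ∃ j', j = j' + 1 := ⟨j - 1, by omega⟩
        exact (hJsucc j' x).2 (h1 j' (by omega))
  have hPncl : ∀ n, IsClosed (Pn n) := fun n => isClosed_biInter fun j _ => hJcl j
  have hPnc : ∀ n, IsCompact (Pn n) :=
    fun n => IsCompact.of_isClosed_subset hPc (hPncl n) (hPsub n)
  have hPno : ∀ n, IsOpen (Pn n) := fun n => isOpen_biInter_finset fun j _ => hJo j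
  have hiInterPn : ∀ m : ℕ, ⋂ k, Pn (m + k) = posPart α P := by
    intro m
    apply Set.Subset.antisymm
    · intro x hx
      refine memQp.2 fun j => ?_
      exact mem_Pn.1 (Set.mem_iInter.1 hx j) j (by omega)
    · intro x hx
      exact Set.mem_iInter.2 fun k => mem_Pn.2 fun j _ => memQp.1 hx j
  -- the index sequence
  set u : ℕ → ℕ := fun n => cIdx (Pn (n + 1)) (Pn n) with hu
  have hfinAB : ∀ n, (cosets (⇑α '' Pn (n + 1)) (⇑α '' Pn n)).Finite := by
    intro n
    refine cosets_finite ((hgrp (n + 1)).image) ?_ ?_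
    · have := isOpen_image_pow (β := α) hc' 1 (hPno (n + 1))
      rwa [pow_one] at this
    · have := isCompact_image_pow (β := α) hc 1 (hPnc n)
      rwa [pow_one] at this
  have hu_step : ∀ n, u (n + 1) ≤ u n := by
    intro n
    have e1 : ⇑α '' Pn (n + 1) ∩ P = Pn (n + 2) := by rw [hPnSucc (n + 1), Set.inter_comm]
    have e2 : ⇑α '' Pn n ∩ P = Pn (n + 1) := by rw [hPnSucc n, Set.inter_comm]
    calc u (n + 1) = cIdx (⇑α '' Pn (n + 1) ∩ P) (⇑α '' Pn n ∩ P) := by rw [e1, e2]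
    _ ≤ cIdx (⇑α '' Pn (n + 1)) (⇑α '' Pn n) :=
        cIdx_le_inter ((hgrp (n + 1)).image) hP (hfinAB n)
    _ = u n := by
        rw [hu]
        exact cIdx_image α (Pn (n + 1)) (Pn n)
  obtain ⟨mv, hmv_mem, hmv_min⟩ :=
    (wellFounded_lt (α := ℕ)).has_min (Set.range u) ⟨u 0, 0, rfl⟩
  obtain ⟨N, hN⟩ := hmv_mem
  have hu_le : ∀ {m n : ℕ}, m ≤ n → u n ≤ u m := by
    intro m n h
    induction n with
    | zero => rw [Nat.le_zero.1 h]
    | succ n ih =>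
        rcases Nat.lt_or_ge m (n + 1) with h' | h'
        · exact (hu_step n).trans (ih (by omega))
        · have : m = n + 1 := by omega
          rw [this]
  have hstab : ∀ n, N ≤ n → u n = u N := by
    intro n hn
    refine le_antisymm (hu_le hn) ?_
    have h1 := hmv_min (u n) ⟨n, rfl⟩
    rw [← hN] at h1
    exact not_lt.1 h1
  -- the basic relation
  have hR : ∀ n, N ≤ n → ⇑α '' Pn n = Pn (n + 1) * ⇑α '' Pn (n + 1) := by
    intro n hn
    have e1 : ⇑α '' Pn (n + 1) ∩ P = Pn (n + 2) := by rw [hPnSucc (n + 1), Set.inter_comm]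
    have e2 : ⇑α '' Pn n ∩ P = Pn (n + 1) := by rw [hPnSucc n, Set.inter_comm]
    apply Set.Subset.antisymm
    · have heq : cIdx (⇑α '' Pn (n + 1) ∩ P) (⇑α '' Pn n ∩ P) =
          cIdx (⇑α '' Pn (n + 1)) (⇑α '' Pn n) := by
        rw [e1, e2, cIdx_image α (Pn (n + 1)) (Pn n)]
        show u (n + 1) = u n
        rw [hstab (n + 1) (by omega), hstab n hn]
      have hcov := cover_of_cIdx_eq ((hgrp (n + 1)).image) hP (hfinAB n) heq
      rw [e2] at hcov
      exact hcov
    · refine mul_subset_of_subsets ((hgrp n).image) ?_ ?_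
      · intro x hx
        rw [hPnSucc n] at hx
        exact hx.2
      · exact Set.image_mono (hanti (by omega))
  -- iterating the relation
  have hRk : ∀ (k n : ℕ), N ≤ n → ⇑α '' Pn n = Pn (n + 1) * ⇑α '' Pn (n + k + 1) := by
    intro k
    induction k with
    | zero => intro n hn; exact hR n hn
    | succ k ih =>
        intro n hn
        rw [ih n hn, hR (n + k + 1) (by omega), ← mul_assoc,
          (hgrp (n + 1)).absorb_right (hanti (by omega)) ⟨1, (hgrp (n + k + 2)).one_mem⟩]
        rfl
  -- the limit relation
  have hlim : ∀ n, N ≤ n → ⇑α '' Pn n = Pn (n + 1) * ⇑α '' posPart α P := by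
    intro n hn
    have h1 : ⇑α '' Pn n = ⋂ k, (Pn (n + 1) * ⇑α '' Pn (n + k + 1)) := by
      apply Set.Subset.antisymm
      · intro x hx
        refine Set.mem_iInter.2 fun k => ?_
        rw [← hRk k n hn]
        exact hx
      · intro x hx
        have := Set.mem_iInter.1 hx 0
        rwa [← hRk 0 n hn] at this
    have h2 : (⋂ k, ⇑α '' Pn (n + k + 1)) = ⇑α '' posPart α P := by
      rw [← Set.image_iInter α.bijective]
      congr 1
      have h3 : (⋂ k, Pn (n + k + 1)) = ⋂ k, Pn (n + 1 + k) := by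
        apply Set.iInter_congr
        intro k
        have he : n + k + 1 = n + 1 + k := by omega
        rw [he]
      rw [h3, hiInterPn (n + 1)]
    have hCc : ∀ k, IsCompact (⇑α '' Pn (n + k + 1)) := by
      intro k
      have := isCompact_image_pow (β := α) hc 1 (hPnc (n + k + 1))
      rwa [pow_one] at this
    have hCanti : ∀ {k l : ℕ}, k ≤ l → ⇑α '' Pn (n + l + 1) ⊆ ⇑α '' Pn (n + k + 1) :=
      fun {k l} hkl => Set.image_mono (hanti (by omega))
    rw [h1, iInter_mul_compact (hPnc (n + 1)) hCc hCanti, h2]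
  -- the shifted chain
  set Qp : Set G := posPart α P with hQpdef
  have hQpgrp : IsSubgroupSet Qp := isSubgroupSet_posPart hP
  have hQpc : IsCompact Qp := isCompact_posPart hc' hPc
  have hQpsubPn : ∀ n, Qp ⊆ Pn n := fun n x hx => mem_Pn.2 fun j _ => memQp.1 hx j
  have hCj : ∀ j : ℕ, ⇑(α ^ j) '' Pn N = Pn (N + j) * ⇑(α ^ j) '' Qp := by
    intro j
    induction j with
    | zero =>
        rw [image_pow_zero, image_pow_zero, Nat.add_zero]
        exact ((hgrp N).absorb_right (hQpsubPn N) ⟨1, hQpgrp.one_mem⟩).symm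
    | succ j ih =>
        have step1 : ⇑(α ^ (j + 1)) '' Pn N = ⇑α '' Pn (N + j) * ⇑(α ^ (j + 1)) '' Qp := by
          rw [image_pow_succ, ih, image_mul_set α, ← image_pow_succ]
        have habs : ⇑α '' Qp * ⇑(α ^ (j + 1)) '' Qp = ⇑(α ^ (j + 1)) '' Qp := by
          refine (hQpgrp.image_pow (j + 1)).absorb_left ?_ ⟨α 1, 1, hQpgrp.one_mem, rfl⟩
          have := image_pow_posPart_mono (β := α) (S := P) (show 1 ≤ j + 1 by omega)
          rwa [pow_one] at this
        rw [step1, hlim (N + j) (by omega), mul_assoc, habs]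
        rfl
  set D : ℕ → Set G := fun j => ⇑(α⁻¹ ^ j) '' Pn (N + j) with hDdef
  have hDj : ∀ j, Pn N = D j * Qp := by
    intro j
    have h0 := congrArg (Set.image ⇑(α⁻¹ ^ j)) (hCj j)
    rw [image_mul_set (α⁻¹ ^ j)] at h0
    rw [image_inv_pow_image_pow, image_inv_pow_image_pow] at h0
    exact h0
  have hDsub1 : ∀ m, ⇑α⁻¹ '' Pn (m + 1) ⊆ Pn m := by
    intro m y hy
    have hy' : α y ∈ Pn (m + 1) := by
      have := mem_image_one.1 hy
      rwa [inv_inv] at this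
    refine mem_Pn.2 fun j hj => ?_
    have := mem_Pn.1 hy' (j + 1) (by omega)
    have h2 := (hJsucc j (α y)).1 this
    rwa [hainv] at h2
  have hDanti : ∀ {k l : ℕ}, k ≤ l → D l ⊆ D k := by
    have hstep : ∀ j, D (j + 1) ⊆ D j := by
      intro j
      have h1 : D (j + 1) = ⇑(α⁻¹ ^ j) '' (⇑α⁻¹ '' Pn (N + j + 1)) := by
        rw [hDdef]
        exact image_pow_succ' α⁻¹ j (Pn (N + j + 1))
      rw [h1]
      exact Set.image_mono (hDsub1 (N + j))
    intro k l hkl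
    induction l with
    | zero => rw [Nat.le_zero.1 hkl]
    | succ l ih =>
        rcases Nat.lt_or_ge k (l + 1) with h' | h'
        · exact (hstep l).trans (ih (by omega))
        · have : k = l + 1 := by omega
          rw [this]
  have hDc : ∀ j, IsCompact (D j) :=
    fun j => isCompact_image_pow (β := α⁻¹) hc' j (hPnc (N + j))
  have hkey : Pn N = (⋂ j, D j) * Qp := by
    have h1 : Pn N = ⋂ j, (D j * Qp) := by
      apply Set.Subset.antisymm
      · intro x hx
        refine Set.mem_iInter.2 fun j => ?_
        rw [← hDj j]
        exact hx
      · intro x hx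
        have := Set.mem_iInter.1 hx 0
        rwa [← hDj 0] at this
    rw [h1, compact_mul_iInter hQpc hDc hDanti]
  -- identification of the intersection with `negPart`
  have hzkey : ∀ (j i : ℕ) (x : G), (α⁻¹ ^ i) ((α ^ j) x) = (α ^ ((j : ℤ) - i)) x := by
    intro j i x
    rw [← zpow_natCast_apply α j x, ← zpow_neg_natCast_apply, ← zpow_add_apply]
    have he : -(i : ℤ) + (j : ℤ) = (j : ℤ) - i := by omega
    rw [he]
  have memD : ∀ {x : G} {j : ℕ}, x ∈ D j ↔ ∀ i ≤ N + j, (α ^ ((j : ℤ) - i)) x ∈ P := by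
    intro x j
    rw [hDdef]
    show x ∈ ⇑(α⁻¹ ^ j) '' Pn (N + j) ↔ _
    rw [mem_image_pow']
    rw [mem_Pn]
    constructor
    · intro h i hi
      have := mem_image_pow.1 (h i hi)
      rwa [hzkey] at this
    · intro h i hi
      refine mem_image_pow.2 ?_
      rw [hzkey]
      exact h i hi
  have memNeg : ∀ {x : G}, x ∈ negPart α (Pn N) ↔
      ∀ (j : ℕ), ∀ i ≤ N, (α ^ ((j : ℤ) - i)) x ∈ P := by
    intro x
    rw [mem_negPart]
    constructor
    · intro h j i hi
      have := mem_image_pow.1 (mem_Pn.1 (h j) i hi)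
      rwa [hzkey] at this
    · intro h j
      refine mem_Pn.2 fun i hi => mem_image_pow.2 ?_
      rw [hzkey]
      exact h j i hi
  have hiD : (⋂ j, D j) = negPart α (Pn N) := by
    ext x
    rw [memNeg]
    rw [Set.mem_iInter]
    constructor
    · intro h j i hiN
      exact memD.1 (h j) i (by omega)
    · intro h j
      refine memD.2 fun i hi => ?_
      rcases le_or_gt 0 ((j : ℤ) - i) with ht | ht
      · have h0 := h ((j : ℤ) - (i : ℤ)).toNat 0 (Nat.zero_le N)
        have heq : ((((j : ℤ) - (i : ℤ)).toNat : ℤ) - ((0 : ℕ) : ℤ)) = (j : ℤ) - i := by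
          omega
        rwa [heq] at h0
      · have h0 := h 0 (i - j) (by omega)
        have heq : (((0 : ℕ) : ℤ) - ((i - j : ℕ) : ℤ)) = (j : ℤ) - i := by
          omega
        rwa [heq] at h0
  have hQpPnN : posPart α (Pn N) = Qp := by
    ext x
    rw [mem_posPart, hQpdef, mem_posPart]
    constructor
    · intro h m
      have := mem_Pn.1 (h m) 0 (Nat.zero_le N)
      rwa [hJ0] at this
    · intro h j
      refine mem_Pn.2 fun i hi => ?_
      refine mem_image_pow.2 ?_
      have : (α⁻¹ ^ i) ((α⁻¹ ^ j) x) = (α⁻¹ ^ (i + j)) x := by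
        rw [pow_add, MulAut.mul_apply]
      rw [this]
      exact h (i + j)
  refine ⟨Pn N, hgrp N, hPnc N, hPno N, hPsub N, hQpPnN, ?_⟩
  rw [hQpPnN, ← hiD, ← hkey]


lemma mem_levSet_of_tails {β : MulAut G} {P : Set G} (hPc : IsCompact P) {x : G} {n : ℕ}
    (hfwd : ∀ m : ℕ, (β ^ m) x ∈ P) (hbwd : ∀ m : ℕ, (β⁻¹ ^ (n + m)) x ∈ P) :
    x ∈ levSet β := by
  classical
  set K : Set G := P ∪ ((fun i : ℕ => (β⁻¹ ^ i) x) '' (Set.Iio n)) with hK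
  have hKc : IsCompact K := hPc.union ((Set.finite_Iio n).image _).isCompact
  refine mem_levSet_of_forall hKc fun t => ?_
  rcases le_or_gt 0 t with ht | ht
  · obtain ⟨m, rfl⟩ := Int.eq_ofNat_of_zero_le ht
    rw [zpow_natCast_apply]
    exact Or.inl (hfwd m)
  · obtain ⟨m, rfl⟩ : ∃ m : ℕ, t = -(m : ℤ) := ⟨t.natAbs, by omega⟩
    rw [zpow_neg_natCast_apply]
    rcases Nat.lt_or_ge m n with hm | hm
    · exact Or.inr ⟨m, hm, rfl⟩
    · have h0 := hbwd (m - n)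
      rw [show n + (m - n) = m from by omega] at h0
      exact Or.inl h0

/-- Step 2: given T1 and the mixing condition, `ppPart` is closed. -/
lemma isClosed_ppPart_of [LocallyCompactSpace G] [TotallyDisconnectedSpace G] {β : MulAut G}
    (hβ : Continuous ⇑β) (hβ' : Continuous ⇑β⁻¹)
    {Q : Set G} (hQgrp : IsSubgroupSet Q) (hQc : IsCompact Q) (hQo : IsOpen Q)
    (hT1 : Q = negPart β Q * posPart β Q)
    (hmix : ∀ n : ℕ, negPart β Q ∩ (⇑(β ^ n) '' posPart β Q) ⊆ posPart β Q) :
    IsClosed (ppPart β Q) := by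
  have hQpc : IsCompact (posPart β Q) := isCompact_posPart hβ' hQc
  have hQpgrp : IsSubgroupSet (posPart β Q) := isSubgroupSet_posPart hQgrp
  have key1 : ppPart β Q ∩ Q ⊆ posPart β Q := by
    rintro a ⟨happ, haQ⟩
    obtain ⟨n, han⟩ := mem_ppPart.1 happ
    rw [hT1] at haQ
    obtain ⟨b, hb, c, hc, hbc⟩ := haQ
    have hc' : c ∈ ⇑(β ^ n) '' posPart β Q := by
      refine image_pow_posPart_mono (Nat.zero_le n) ?_
      rw [image_pow_zero]
      exact hc
    have hbmem : b ∈ negPart β Q ∩ ⇑(β ^ n) '' posPart β Q := by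
      refine ⟨hb, ?_⟩
      have hba : b = a * c⁻¹ := by rw [← hbc]; group
      rw [hba]
      exact (hQpgrp.image_pow n).mul_mem han ((hQpgrp.image_pow n).inv_mem hc')
    have hbpos := hmix n hbmem
    rw [← hbc]
    exact hQpgrp.mul_mem hbpos hc
  have key2 : closure (ppPart β Q) ∩ Q ⊆ posPart β Q := by
    rintro x ⟨hxcl, hxQ⟩
    have hxcls : x ∈ closure (posPart β Q) := by
      rw [mem_closure_iff]
      intro O hOo hxO
      obtain ⟨W, hWc, hWo, hWsub⟩ :=
        exists_compactOpen_subgroup_nhds (hOo.inter hQo) ⟨hxO, hxQ⟩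
      have himgo : IsOpen ((fun g => x * g) '' (W : Set G)) := by
        have : ((fun g => x * g) '' (W : Set G)) = x • (W : Set G) := by
          ext z
          simp only [Set.mem_image, Set.mem_smul_set, smul_eq_mul]
        rw [this]
        exact hWo.smul x
      have hximg : x ∈ (fun g => x * g) '' (W : Set G) := ⟨1, W.one_mem, mul_one x⟩
      obtain ⟨a, haU, happ⟩ := mem_closure_iff.1 hxcl _ himgo hximg
      have haOQ : a ∈ O ∩ Q := hWsub haU
      exact ⟨a, haOQ.1, key1 ⟨happ, haOQ.2⟩⟩
    rwa [hQpc.isClosed.closure_eq] at hxcls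
  refine isClosed_of_closure_subset ?_
  intro x hx
  obtain ⟨a, haxQ, happ⟩ :=
    mem_closure_iff.1 hx (x • Q) (hQo.smul x) ⟨1, hQgrp.one_mem, mul_one x⟩
  obtain ⟨w, hw, hwa⟩ := haxQ
  have hq : a⁻¹ * x ∈ Q := by
    have hwa' : a⁻¹ * x = w⁻¹ := by
      rw [← hwa]; simp only [smul_eq_mul]; group
    rw [hwa']
    exact hQgrp.inv_mem hw
  obtain ⟨Hpp, hHpp⟩ := (isSubgroupSet_ppPart hQgrp).toSubgroup
  have hclgrp : IsSubgroupSet (closure (ppPart β Q)) := by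
    have h1 := IsSubgroupSet.coe (Hpp.topologicalClosure)
    rwa [Subgroup.topologicalClosure_coe, hHpp] at h1
  have hqcl : a⁻¹ * x ∈ closure (ppPart β Q) :=
    hclgrp.mul_mem (hclgrp.inv_mem (subset_closure happ)) hx
  have hqpos : a⁻¹ * x ∈ posPart β Q := key2 ⟨hqcl, hq⟩
  have hxa : x = a * (a⁻¹ * x) := by group
  rw [hxa]
  exact (isSubgroupSet_ppPart hQgrp).mul_mem happ (posPart_subset_ppPart hqpos)


/-- the reverse direction -/
lemma isTidy_of_isTidyOn [LocallyCompactSpace G] [TotallyDisconnectedSpace G] {α : MulAut G}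
    (hc : Continuous ⇑α) (hc' : Continuous ⇑α⁻¹) (h : IsTidyOn α (levSet α)) : IsTidy α := by
  intro U hU
  have hcc : Continuous ⇑α⁻¹⁻¹ := by rw [inv_inv]; exact hc
  obtain ⟨U₀, hU₀o, h1U₀, hU₀sq⟩ := exists_open_nhds_one_mul_subset hU
  obtain ⟨V, hVtidy, hVU₀⟩ := h U₀ (hU₀o.mem_nhds h1U₀)
  have hVinv : ⇑α '' (V : Set G) = (V : Set G) := image_eq_of_isTidyForIn hc hc' hVtidy
  obtain ⟨hVM, hVc, hVo, hVT1, -, -⟩ := hVtidy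
  obtain ⟨O, hOo, hOM⟩ := (relOpen_iff hVM).1 hVo
  have h1O : (1 : G) ∈ O := by
    have : (1 : G) ∈ O ∩ levSet α := hOM.symm ▸ V.one_mem
    exact this.1
  have hUO : U₀ ∩ O ∈ 𝓝 (1 : G) := (hU₀o.inter hOo).mem_nhds ⟨h1U₀, h1O⟩
  obtain ⟨W₀, hW₀c, hW₀o, hW₀sub⟩ := exists_compactOpen_subgroup hUO
  obtain ⟨W₁, hW₁W₀, hW₁o, hW₁c, hW₁conj⟩ := exists_conj_invariant_subgroup hVc hW₀o hW₀c
  set Pset : Set G := (V : Set G) * (W₁ : Set G) with hPdef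
  have hPgrp : IsSubgroupSet Pset := by
    constructor
    · exact ⟨1, V.one_mem, 1, W₁.one_mem, mul_one 1⟩
    · rintro _ _ ⟨v, hv, w, hw, rfl⟩ ⟨v', hv', w', hw', rfl⟩
      refine ⟨v * v', V.mul_mem hv hv', (v'⁻¹ * w * v'⁻¹⁻¹) * w',
        W₁.mul_mem (hW₁conj v'⁻¹ (V.inv_mem hv') w hw) hw', ?_⟩
      group
    · rintro _ ⟨v, hv, w, hw, rfl⟩
      refine ⟨v⁻¹, V.inv_mem hv, v * w⁻¹ * v⁻¹, hW₁conj v hv w⁻¹ (W₁.inv_mem hw), ?_⟩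
      group
  have hPc : IsCompact Pset := hVc.mul hW₁c
  have hPo : IsOpen Pset := hW₁o.mul_left
  have hPU : Pset ⊆ U := by
    rintro _ ⟨v, hv, w, hw, rfl⟩
    exact hU₀sq (Set.mul_mem_mul (hVU₀ hv) (hW₀sub (hW₁W₀ hw)).1)
  have hPM : Pset ∩ levSet α ⊆ (V : Set G) := by
    rintro x ⟨⟨v, hv, w, hw, rfl⟩, hM⟩
    have hwM : w ∈ levSet α := by
      have hweq : w = v⁻¹ * (v * w) := by group
      rw [hweq]
      exact (isSubgroupSet_levSet α).mul_mem ((isSubgroupSet_levSet α).inv_mem (hVM hv)) hM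
    have hwV : w ∈ (V : Set G) := by
      rw [← hOM]
      exact ⟨(hW₀sub (hW₁W₀ hw)).2, hwM⟩
    exact V.mul_mem hv hwV
  have hVinv' : ⇑α⁻¹ '' (V : Set G) = (V : Set G) := image_inv_of_image_eq hVinv
  have hVpow : ∀ n : ℕ, ⇑(α ^ n) '' (V : Set G) = (V : Set G) := image_pow_of_image_eq hVinv
  have hVpow' : ∀ n : ℕ, ⇑(α⁻¹ ^ n) '' (V : Set G) = (V : Set G) := image_pow_of_image_eq hVinv'
  obtain ⟨Q, hQgrp, hQc, hQo, hQP, hQpos, hQT1⟩ := exists_T1_subgroup hc hc' hPgrp hPc hPo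
  have hVsubP : (V : Set G) ⊆ Pset := fun v hv => ⟨v, hv, 1, W₁.one_mem, mul_one v⟩
  have hVQp : (V : Set G) ⊆ posPart α Q := by
    rw [hQpos]
    intro v hv
    refine mem_posPart.2 fun n => hVsubP ?_
    rw [← hVpow' n]
    exact ⟨v, hv, rfl⟩
  have hVQm : (V : Set G) ⊆ negPart α Q := by
    intro v hv
    refine mem_negPart.2 fun n => ?_
    have hvn : (α ^ n) v ∈ (V : Set G) := by
      rw [← hVpow n]; exact ⟨v, hv, rfl⟩
    exact posPart_subset (hVQp hvn)
  have hmix : ∀ n : ℕ, negPart α Q ∩ (⇑(α ^ n) '' posPart α Q) ⊆ posPart α Q := by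
    rintro n x ⟨hxm, hxp⟩
    have hfwd : ∀ m : ℕ, (α ^ m) x ∈ Pset := fun m => hQP (mem_negPart.1 hxm m)
    have hbwd : ∀ m : ℕ, (α⁻¹ ^ (n + m)) x ∈ Pset := by
      intro m
      have h1 := mem_image_pow.1 hxp
      have h2 := mem_posPart.1 h1 m
      have h3 : (α⁻¹ ^ (n + m)) x = (α⁻¹ ^ m) ((α⁻¹ ^ n) x) := by
        rw [show n + m = m + n from by omega, pow_add, MulAut.mul_apply]
      rw [h3]
      exact hQP h2
    have hxM : x ∈ levSet α := mem_levSet_of_tails hPc hfwd hbwd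
    have hxQ : x ∈ Q := by
      have := mem_negPart.1 hxm 0
      rwa [pow_zero, MulAut.one_apply] at this
    exact hVQp (hPM ⟨hQP hxQ, hxM⟩)
  have hmix' : ∀ n : ℕ, negPart α⁻¹ Q ∩ (⇑(α⁻¹ ^ n) '' posPart α⁻¹ Q) ⊆ posPart α⁻¹ Q := by
    rintro n x ⟨hxm, hxp⟩
    have hfwd : ∀ m : ℕ, (α⁻¹ ^ m) x ∈ Pset := fun m => hQP (mem_negPart.1 hxm m)
    have hxp' : (α ^ n) x ∈ negPart α Q := by
      have h1 := mem_image_pow.1 hxp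
      rw [inv_inv] at h1
      rw [← negPart_eq_posPart_inv] at h1
      exact h1
    have hbwd : ∀ m : ℕ, (α⁻¹⁻¹ ^ (n + m)) x ∈ Pset := by
      intro m
      rw [inv_inv]
      have h2 := mem_negPart.1 hxp' m
      have h3 : (α ^ (n + m)) x = (α ^ m) ((α ^ n) x) := by
        rw [show n + m = m + n from by omega, pow_add, MulAut.mul_apply]
      rw [h3]
      exact hQP h2
    have hxM : x ∈ levSet α := by
      rw [← levSet_inv]
      exact mem_levSet_of_tails hPc hfwd hbwd
    have hxQ : x ∈ Q := by
      have := mem_negPart.1 hxm 0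
      rwa [pow_zero, MulAut.one_apply] at this
    have hxV := hPM ⟨hQP hxQ, hxM⟩
    rw [← negPart_eq_posPart_inv]
    exact hVQm hxV
  have hQT1' : Q = posPart α Q * negPart α Q := by
    have h1 := congrArg (fun S : Set G => S⁻¹) hQT1
    simp only [mul_inv_rev] at h1
    rw [inv_set_eq hQgrp, inv_set_eq (isSubgroupSet_posPart hQgrp)] at h1
    rw [show (negPart α Q)⁻¹ = negPart α Q from
      inv_set_eq (isSubgroupSet_posPart hQgrp)] at h1
    exact h1
  have hpp : IsClosed (ppPart α Q) := isClosed_ppPart_of hc hc' hQgrp hQc hQo hQT1 hmix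
  have hmm : IsClosed (mmPart α Q) := by
    rw [mmPart_eq_ppPart_inv]
    refine isClosed_ppPart_of hc' hcc hQgrp hQc hQo ?_ hmix'
    rw [show negPart α⁻¹ Q = posPart α Q by rw [negPart_eq_posPart_inv, inv_inv],
      ← negPart_eq_posPart_inv]
    exact hQT1'
  obtain ⟨Qs, hQs⟩ := hQgrp.toSubgroup
  refine ⟨Qs, ⟨?_, ?_, ?_, ?_, ?_⟩, ?_⟩
  · rw [hQs]; exact hQc
  · rw [hQs]; exact hQo
  · rw [hQs]; exact hQT1'
  · rw [hQs]; exact hpp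
  · rw [hQs]; exact hmm
  · rw [hQs]; exact hQP.trans hPU

end TidyAux

end TidyAux

/-- `α` is tidy if and only if `α|_{M_α}` is tidy. -/
theorem isTidy_iff_isTidyOn_levSet
    {G : Type*} [Group G] [TopologicalSpace G] [IsTopologicalGroup G]
    [T2Space G] [LocallyCompactSpace G] [TotallyDisconnectedSpace G]
    (α : MulAut G) (hc : Continuous ⇑α) (hc' : Continuous ⇑α⁻¹) :
    IsTidy α ↔ IsTidyOn α (levSet α) :=
  ⟨fun h => TidyAux.isTidyOn_of_isTidy hc hc' h, fun h => TidyAux.isTidy_of_isTidyOn hc hc' h⟩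
end

section
/- Let G be a totally disconnected, locally compact Hausdorff topological group and α a tidy bicontinuous automorphism of G. Then the contraction groups U_α and U_{α^{-1}} are closed subgroups of G. -/
open Filter Topology Set Pointwise MeasureTheory
open scoped ENNReal

variable {G : Type*} [Group G] [TopologicalSpace G] [IsTopologicalGroup G]

lemma pow_apply_inv_pow_apply (β : MulAut G) (k : ℕ) (x : G) :
    (β ^ k) ((β⁻¹ ^ k) x) = x := by
  rw [inv_pow]; exact MulAut.apply_inv_self G _ _

lemma inv_pow_apply_pow_apply (β : MulAut G) (k : ℕ) (x : G) :
    (β⁻¹ ^ k) ((β ^ k) x) = x := by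
  rw [inv_pow]; exact MulAut.inv_apply_self G _ _

lemma mem_mmPart_iff (β : MulAut G) (V : Set G) (x : G) :
    x ∈ mmPart β V ↔ ∃ N : ℕ, ∀ n ≥ N, (β ^ n) x ∈ V := by
  constructor
  · rintro hx
    obtain ⟨N, y, hy, rfl⟩ : ∃ N : ℕ, ∃ y ∈ negPart β V, (β⁻¹ ^ N) y = x := by
      simpa [mmPart] using hx
    refine ⟨N, fun n hn => ?_⟩
    obtain ⟨k, rfl⟩ := Nat.exists_eq_add_of_le hn
    have h1 : (β ^ (N + k)) ((β⁻¹ ^ N) y) = (β ^ k) y := by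
      rw [add_comm, pow_add, MulAut.mul_apply, pow_apply_inv_pow_apply]
    rw [h1]
    have := Set.mem_iInter.mp hy k
    obtain ⟨z, hz, rfl⟩ := this
    rw [pow_apply_inv_pow_apply]
    exact hz
  · rintro ⟨N, hN⟩
    have hx : x = (β⁻¹ ^ N) ((β ^ N) x) := (inv_pow_apply_pow_apply β N x).symm
    rw [mmPart, Set.mem_iUnion]
    refine ⟨N, (β ^ N) x, ?_, (inv_pow_apply_pow_apply β N x)⟩
    rw [_root_.negPart, Set.mem_iInter]
    intro k
    refine ⟨(β ^ (k + N)) x, hN _ (Nat.le_add_left N k), ?_⟩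
    rw [pow_add, MulAut.mul_apply, inv_pow_apply_pow_apply]

lemma contraction_subgroup_closed_aux (β : MulAut G)
    (h : ∀ U ∈ 𝓝 (1 : G), ∃ V : Subgroup G, IsOpen (V : Set G) ∧
      IsClosed (mmPart β (V : Set G)) ∧ (V : Set G) ⊆ U) :
    IsClosed (contractionGroup β) := by
  apply isClosed_of_closure_subset
  intro x hx
  show Tendsto (fun n : ℕ => (β ^ n) x) atTop (𝓝 1)
  rw [tendsto_atTop']
  intro U hU
  obtain ⟨V, hVo, hVc, hVU⟩ := h U hU
  have hsub : contractionGroup β ⊆ mmPart β (V : Set G) := by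
    intro u hu
    rw [mem_mmPart_iff]
    exact tendsto_atTop'.mp hu (V : Set G) (hVo.mem_nhds V.one_mem)
  have hxm : x ∈ mmPart β (V : Set G) := by
    have := closure_mono hsub hx
    rwa [hVc.closure_eq] at this
  obtain ⟨N, hN⟩ := (mem_mmPart_iff β (V : Set G) x).mp hxm
  exact ⟨N, fun n hn => hVU (hN n hn)⟩

lemma mmPart_inv (β : MulAut G) (V : Set G) : mmPart β⁻¹ V = ppPart β V := by
  simp [mmPart, ppPart, _root_.negPart, _root_.posPart]

lemma contraction_one_mem (β : MulAut G) : (1 : G) ∈ contractionGroup β := by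
  have : (fun n : ℕ => (β ^ n) (1 : G)) = fun _ => (1 : G) := by
    funext n; exact map_one _
  show Tendsto _ atTop (𝓝 1)
  rw [this]
  exact tendsto_const_nhds

lemma contraction_mul_inv_mem (β : MulAut G) {x y : G}
    (hx : x ∈ contractionGroup β) (hy : y ∈ contractionGroup β) :
    x * y⁻¹ ∈ contractionGroup β := by
  have h : Tendsto (fun n : ℕ => (β ^ n) x * ((β ^ n) y)⁻¹) atTop (𝓝 (1 * (1 : G)⁻¹)) :=
    hx.mul hy.inv
  simp only [inv_one, mul_one] at h
  show Tendsto (fun n : ℕ => (β ^ n) (x * y⁻¹)) atTop (𝓝 1)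
  have : (fun n : ℕ => (β ^ n) (x * y⁻¹)) = fun n => (β ^ n) x * ((β ^ n) y)⁻¹ := by
    funext n; rw [map_mul, map_inv]
  rw [this]
  exact h

/-- If `α` is tidy, then `U_α` and `U_{α⁻¹}` are closed subgroups of `G`. -/
theorem contractionGroup_isClosed_of_tidy
    {G : Type*} [Group G] [TopologicalSpace G] [IsTopologicalGroup G]
    [T2Space G] [LocallyCompactSpace G] [TotallyDisconnectedSpace G]
    (α : MulAut G) (hc : Continuous ⇑α) (hc' : Continuous ⇑α⁻¹)
    (hα : IsTidy α) :
    ((1 : G) ∈ contractionGroup α ∧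
      (∀ x ∈ contractionGroup α, ∀ y ∈ contractionGroup α,
        x * y⁻¹ ∈ contractionGroup α) ∧
      IsClosed (contractionGroup α)) ∧
    ((1 : G) ∈ contractionGroup α⁻¹ ∧
      (∀ x ∈ contractionGroup α⁻¹, ∀ y ∈ contractionGroup α⁻¹,
        x * y⁻¹ ∈ contractionGroup α⁻¹) ∧
      IsClosed (contractionGroup α⁻¹)) := by
  refine ⟨⟨contraction_one_mem α, fun x hx y hy => contraction_mul_inv_mem α hx hy, ?_⟩,
    ⟨contraction_one_mem α⁻¹, fun x hx y hy => contraction_mul_inv_mem α⁻¹ hx hy, ?_⟩⟩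
  · apply contraction_subgroup_closed_aux
    intro U hU
    obtain ⟨V, ⟨_, hVo, _, _, hmm⟩, hVU⟩ := hα U hU
    exact ⟨V, hVo, hmm, hVU⟩
  · apply contraction_subgroup_closed_aux
    intro U hU
    obtain ⟨V, ⟨_, hVo, _, hpp, _⟩, hVU⟩ := hα U hU
    refine ⟨V, hVo, ?_, hVU⟩
    rw [mmPart_inv]
    exact hpp
end
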